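/- arXiv:math/0207112 — 5 statements merged into one kernel-verified Lean document; each statement's English description precedes it below -/
import Mathlib

section
/- Let G = (V,E) be a finite graph of maximum degree at most Δ which is an edge b-expander, let A > 0 satisfy (Δe)A^b < 1, let c > 0, and let p ∈ [1−A, 1]. Then the probability that the random subgraph G(p) contains a connected component whose number of vertices lies between c|V| and |V|/2 is at most (1/c) · ((Δe)A^b)^{c|V|} / (1 − (Δe)A^b). -/
open Filter Topology
open scoped Classical

noncomputable section

variable {V : Type*}

/-- Probability that the random subgraph `G(p)` lies in the event `A`. -/
noncomputable def percProb [Fintype V] [DecidableEq V] (G : SimpleGraph V) [DecidableRel G.Adj]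
    (p : ℝ) (A : Set (Finset (Sym2 V))) : ℝ :=
  ∑ F ∈ G.edgeFinset.powerset,
    if F ∈ A then p ^ F.card * (1 - p) ^ (G.edgeFinset.card - F.card) else 0

/-- Number of vertices in the component of `v` in the spanning subgraph with edge set `F`. -/
noncomputable def compCard [Fintype V] (F : Finset (Sym2 V)) (v : V) : ℕ :=
  Set.ncard {w | (SimpleGraph.fromEdgeSet (↑F : Set (Sym2 V))).Reachable v w}

/-- The ball of radius `r` around `w`. -/
def ball (G : SimpleGraph V) (w : V) (r : ℕ) : Set V :=
  {v | ∃ q : G.Walk w v, q.length ≤ r}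

/-- The ball of radius `r` around a set `A`. -/
def setBall (G : SimpleGraph V) (A : Set V) (r : ℕ) : Set V :=
  {v | ∃ u ∈ A, ∃ q : G.Walk u v, q.length ≤ r}

/-- `G` is a vertex `b`-expander. -/
def VertexExpander [Fintype V] (G : SimpleGraph V) (b : ℝ) : Prop :=
  ∀ A : Finset V, 0 < A.card → (A.card : ℝ) ≤ Fintype.card V / 2 →
    b * A.card ≤ (Set.ncard {v | v ∉ A ∧ ∃ u ∈ A, G.Adj u v} : ℝ)

/-- The set of edges of `G` with exactly one endpoint in `A`. -/
def edgeBoundary (G : SimpleGraph V) (A : Set V) : Set (Sym2 V) :=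
  {e | e ∈ G.edgeSet ∧ ∃ u v : V, e = s(u, v) ∧ u ∈ A ∧ v ∉ A}

/-- `G` is an edge `b`-expander. -/
def EdgeExpander [Fintype V] (G : SimpleGraph V) (b : ℝ) : Prop :=
  ∀ A : Finset V, 0 < A.card → (A.card : ℝ) ≤ Fintype.card V / 2 →
    b * A.card ≤ ((edgeBoundary G ↑A).ncard : ℝ)

/-- `e` is an `L`-bridge for configuration `F` (largeness threshold `c * |V|`). -/
def IsLBridge [Fintype V] (G : SimpleGraph V) (c : ℝ) (F : Finset (Sym2 V)) (e : Sym2 V) : Prop :=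
  e ∈ G.edgeSet ∧ ∃ u v : V, e = s(u, v) ∧
    ¬ (SimpleGraph.fromEdgeSet (↑(F.erase e) : Set (Sym2 V))).Reachable u v ∧
    c * Fintype.card V ≤ (compCard (F.erase e) u : ℝ) ∧
    c * Fintype.card V ≤ (compCard (F.erase e) v : ℝ)

/-- `F` has more than one component with at least `s` vertices. -/
def TwoLargeComponents [Fintype V] (F : Finset (Sym2 V)) (s : ℝ) : Prop :=
  ∃ v w : V, ¬ (SimpleGraph.fromEdgeSet (↑F : Set (Sym2 V))).Reachable v w ∧
    s ≤ (compCard F v : ℝ) ∧ s ≤ (compCard F w : ℝ)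

/-- The edge-isoperimetric number (Cheeger constant) of `G`. -/
noncomputable def isoNumber [Fintype V] (G : SimpleGraph V) : ℝ :=
  sInf {x : ℝ | ∃ A : Finset V, 0 < A.card ∧ (A.card : ℝ) ≤ Fintype.card V / 2 ∧
    x = ((edgeBoundary G ↑A).ncard : ℝ) / A.card}


/-!
A component `C` of `G(p)` with `c|V| ≤ |C| ≤ |V|/2` is a connected vertex set none of whose
`≥ b|C|` boundary edges is open, an event of probability `(1-p)^{|∂C|} ≤ (A^b)^{|C|}`. A union
bound over connected sets, of which there are at most `(|V|/k) (eΔ)^k` of size `k`, leaves a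
geometric series in `ΔeA^b` starting at `k = c|V|`.

The count of connected `k`-sets through a vertex `v` is site percolation with density `1/Δ`: for
distinct such sets `S` the events "`S` is open and its outer vertex boundary is closed" are
disjoint, and each has probability at least `(eΔ)^{-k}` since that boundary has at most
`(Δ - 1)k` vertices.
-/

open Finset

theorem sum_Icc_pow_mul_pow {α R : Type*} [DecidableEq α] [CommSemiring R] (a b : R)
    {s t : Finset α} (h : s ⊆ t) :
    ∑ u ∈ Icc s t, a ^ #u * b ^ (#t - #u) = a ^ #s * (a + b) ^ (#t - #s) := by
  have hdisj : ∀ u ∈ (t \ s).powerset, Disjoint s u := fun u hu =>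
    disjoint_of_subset_right (mem_powerset.mp hu) disjoint_sdiff
  rw [Icc_eq_image_powerset h, sum_image, ← card_sdiff_of_subset h, ← sum_pow_mul_eq_add_pow,
    mul_sum]
  · refine sum_congr rfl fun u hu => ?_
    have hut := card_le_card (mem_powerset.mp hu)
    rw [card_sdiff_of_subset h] at hut ⊢
    rw [card_union_of_disjoint (hdisj u hu), pow_add, mul_assoc, Nat.sub_add_eq]
  · intro u hu w hw huw
    rw [← union_sdiff_cancel_left (hdisj u hu), ← union_sdiff_cancel_left (hdisj w hw)]
    exact congrArg (· \ s) huw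

/-- `q ^ #(P i) * (1 - q) ^ #(Q i)` is the probability that a `q`-random subset of `α` contains
`P i` and avoids `Q i`; the hypothesis `hI` says that these events are disjoint. -/
theorem sum_pow_mul_one_sub_pow_le_one {α ι : Type*} [Fintype α] [DecidableEq α] {q : ℝ}
    (hq0 : 0 ≤ q) (hq1 : q ≤ 1) (I : Finset ι) (P Q : ι → Finset α)
    (hPQ : ∀ i ∈ I, Disjoint (P i) (Q i))
    (hI : (I : Set ι).PairwiseDisjoint fun i => Icc (P i) (Q i)ᶜ) :
    ∑ i ∈ I, q ^ #(P i) * (1 - q) ^ #(Q i) ≤ 1 := by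
  have h1q : 0 ≤ 1 - q := by linarith
  have hcyl : ∀ i ∈ I, q ^ #(P i) * (1 - q) ^ #(Q i)
      = ∑ u ∈ Icc (P i) (Q i)ᶜ, q ^ #u * (1 - q) ^ (Fintype.card α - #u) := by
    intro i hi
    have hsub : P i ⊆ (Q i)ᶜ := subset_compl_iff_disjoint_right.mpr (hPQ i hi)
    have := sum_Icc_pow_mul_pow q (1 - q) hsub
    rw [add_sub_cancel, one_pow, mul_one] at this
    rw [← this, sum_mul]
    refine sum_congr rfl fun u hu => ?_
    have hu := card_le_card (mem_Icc.mp hu).2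
    rw [card_compl] at hu ⊢
    have := card_le_univ (Q i)
    rw [mul_assoc, ← pow_add]
    congr 2
    omega
  rw [sum_congr rfl hcyl, ← sum_biUnion hI]
  calc _ ≤ ∑ u ∈ (univ : Finset α).powerset, q ^ #u * (1 - q) ^ (Fintype.card α - #u) :=
        sum_le_sum_of_subset_of_nonneg (fun u _ => mem_powerset.mpr (subset_univ u))
          fun u _ _ => by positivity
    _ = 1 := by rw [← card_univ, sum_pow_mul_eq_add_pow, add_sub_cancel, one_pow]

theorem sum_card_eq_sum_card_filter_mem {α : Type*} [Fintype α] [DecidableEq α]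
    (𝒞 : Finset (Finset α)) :
    ∑ S ∈ 𝒞, #S = ∑ a, #{S ∈ 𝒞 | a ∈ S} := by
  simp_rw [card_filter]
  rw [sum_comm]
  simp

theorem exp_neg_one_le_one_sub_inv_pow (n : ℕ) : Real.exp (-1) ≤ (1 - (n : ℝ)⁻¹) ^ (n - 1) := by
  obtain _ | k := n
  · simp
  have hinv : ((1 + (k : ℝ)⁻¹) ^ k)⁻¹ = (1 - ((k + 1 : ℕ) : ℝ)⁻¹) ^ k := by
    rcases k.eq_zero_or_pos with rfl | hk
    · simp
    · rw [← inv_pow]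
      congr 1
      field_simp
      push_cast
      ring
  rw [Nat.add_sub_cancel, Real.exp_neg, ← hinv]
  exact inv_anti₀ (by positivity) Real.one_add_inv_pow_le_exp

theorem sum_Icc_pow_le_rpow_div {x : ℝ} (hx0 : 0 < x) (hx1 : x < 1) (r : ℝ) (n : ℕ) :
    ∑ k ∈ Icc ⌈r⌉₊ n, x ^ k ≤ x ^ r / (1 - x) := by
  rw [← Ico_add_one_right_eq_Icc]
  refine (geom_sum_Ico_le_of_lt_one hx0.le hx1).trans ?_
  gcongr
  rw [← Real.rpow_natCast]
  exact Real.rpow_le_rpow_of_exponent_ge hx0 hx1.le (Nat.le_ceil r)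

section Percolation

variable [Fintype V] [DecidableEq V] (G : SimpleGraph V) [DecidableRel G.Adj]

theorem percProb_eq_zero {p : ℝ} {𝒜 : Set (Finset (Sym2 V))}
    (h : ∀ F ⊆ G.edgeFinset, F ∉ 𝒜) : percProb G p 𝒜 = 0 :=
  sum_eq_zero fun F hF => if_neg (h F (mem_powerset.mp hF))

theorem percProb_le_sum {p : ℝ} (hp0 : 0 ≤ p) (hp1 : p ≤ 1) {ι : Type*} (I : Finset ι)
    (𝒜 : Set (Finset (Sym2 V))) (ℬ : ι → Set (Finset (Sym2 V)))
    (hcover : ∀ F ⊆ G.edgeFinset, F ∈ 𝒜 → ∃ i ∈ I, F ∈ ℬ i) :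
    percProb G p 𝒜 ≤ ∑ i ∈ I, percProb G p (ℬ i) := by
  unfold percProb
  rw [sum_comm]
  refine sum_le_sum fun F hF => ?_
  set w := p ^ #F * (1 - p) ^ (#G.edgeFinset - #F)
  have hw : 0 ≤ w := by
    have : 0 ≤ 1 - p := by linarith
    positivity
  have hterm : ∀ i ∈ I, 0 ≤ if F ∈ ℬ i then w else 0 := fun i _ => by split_ifs <;> simp [hw]
  split_ifs with hF𝒜
  · obtain ⟨i, hi, hFi⟩ := hcover F (mem_powerset.mp hF) hF𝒜
    simpa [hFi] using single_le_sum hterm hi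
  · exact sum_nonneg hterm

theorem percProb_disjoint (p : ℝ) {Q : Finset (Sym2 V)} (hQ : Q ⊆ G.edgeFinset) :
    percProb G p {F | Disjoint F Q} = (1 - p) ^ #Q := by
  calc percProb G p {F | Disjoint F Q}
      = ∑ F ∈ (G.edgeFinset \ Q).powerset, p ^ #F * (1 - p) ^ (#G.edgeFinset - #F) := by
        have hfilter :
            {F ∈ G.edgeFinset.powerset | Disjoint F Q} = (G.edgeFinset \ Q).powerset := by
          ext F
          simp [subset_sdiff]
        rw [percProb, ← hfilter, sum_filter]
        exact sum_congr rfl fun F _ => by congr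
    _ = ∑ F ∈ (G.edgeFinset \ Q).powerset,
        p ^ #F * (1 - p) ^ (#(G.edgeFinset \ Q) - #F) * (1 - p) ^ #Q := by
        refine sum_congr rfl fun F hF => ?_
        have := card_le_card (mem_powerset.mp hF)
        rw [card_sdiff_of_subset hQ] at this ⊢
        have := card_le_card hQ
        rw [mul_assoc, ← pow_add]
        congr 2
        omega
    _ = (1 - p) ^ #Q := by rw [← sum_mul, sum_pow_mul_eq_add_pow, add_sub_cancel, one_pow, one_mul]

end Percolation

theorem card_pos_of_connected_induce {G : SimpleGraph V} {S : Finset V}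
    (hS : (G.induce (S : Set V)).Connected) : 0 < #S :=
  let ⟨⟨v, hv⟩⟩ := hS.nonempty
  card_pos.mpr ⟨v, hv⟩

section ConnectedSets

variable [Fintype V] [DecidableEq V] (G : SimpleGraph V) [DecidableRel G.Adj]

def outerBoundary (S : Finset V) : Finset V := {w | w ∉ S ∧ ∃ u ∈ S, G.Adj u w}

def connectedSetsOfCard (k : ℕ) : Finset (Finset V) :=
  {S | #S = k ∧ (G.induce (S : Set V)).Connected}

variable {G}

theorem disjoint_outerBoundary (S : Finset V) : Disjoint S (outerBoundary G S) :=
  disjoint_left.mpr fun _ hw hw' => (mem_filter.mp hw').2.1 hw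

theorem subset_of_connected_of_disjoint_outerBoundary {S T : Finset V} {v : V}
    (hS : (G.induce (S : Set V)).Connected) (hvS : v ∈ S) (hvT : v ∈ T)
    (hST : Disjoint S (outerBoundary G T)) : S ⊆ T := by
  intro w hwS
  by_contra hwT
  obtain ⟨p⟩ := hS.preconnected ⟨v, hvS⟩ ⟨w, hwS⟩
  obtain ⟨d, hd, hdT, hdT'⟩ :=
    (p.map (SimpleGraph.Embedding.induce _).toHom).exists_boundary_dart T hvT hwT
  have hdS : d.snd ∈ S := by
    have := SimpleGraph.Walk.dart_snd_mem_support_of_mem_darts _ hd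
    rw [SimpleGraph.Walk.support_map, List.mem_map] at this
    obtain ⟨x, -, hx⟩ := this
    exact hx ▸ x.2
  exact disjoint_left.mp hST hdS (mem_filter.mpr ⟨mem_univ _, hdT', d.fst, hdT, d.adj⟩)

theorem card_outerBoundary_le {Δ : ℕ} (hdeg : ∀ v, G.degree v ≤ Δ) {S : Finset V}
    (hS : (G.induce (S : Set V)).Connected) (hcard : 2 ≤ #S) :
    #(outerBoundary G S) ≤ (Δ - 1) * #S := by
  have : Nontrivial (S : Set V) := Set.nontrivial_coe_sort.mpr (one_lt_card_iff_nontrivial.mp hcard)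
  have hsub : outerBoundary G S ⊆ S.biUnion fun u => G.neighborFinset u \ S := by
    intro w hw
    obtain ⟨-, hwS, u, hu, huw⟩ := mem_filter.mp hw
    exact mem_biUnion.mpr ⟨u, hu, by simp [hwS, huw]⟩
  refine (card_le_card hsub).trans (card_biUnion_le.trans ?_)
  rw [mul_comm, ← smul_eq_mul, ← sum_const]
  refine sum_le_sum fun u hu => ?_
  obtain ⟨⟨x, hxS⟩, hux⟩ := hS.preconnected.exists_adj_of_nontrivial ⟨u, hu⟩
  have hx : x ∈ G.neighborFinset u := by simpa using hux
  calc #(G.neighborFinset u \ S) ≤ #((G.neighborFinset u).erase x) :=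
        card_le_card fun y hy => by
          rw [Finset.mem_sdiff] at hy
          exact mem_erase.mpr ⟨fun h => hy.2 (h ▸ hxS), hy.1⟩
    _ ≤ Δ - 1 := by
        rw [card_erase_of_mem hx, SimpleGraph.card_neighborFinset_eq_degree]
        exact Nat.sub_le_sub_right (hdeg u) 1

end ConnectedSets

section Counting

variable [Fintype V] [DecidableEq V] {G : SimpleGraph V} [DecidableRel G.Adj]

theorem sum_connectedSetsOfCard_weight_le_one {q : ℝ} (hq0 : 0 ≤ q) (hq1 : q ≤ 1) (v : V) (k : ℕ) :
    ∑ S ∈ connectedSetsOfCard G k with v ∈ S, q ^ k * (1 - q) ^ #(outerBoundary G S) ≤ 1 := by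
  have hmem : ∀ S ∈ {S ∈ connectedSetsOfCard G k | v ∈ S},
      #S = k ∧ (G.induce (S : Set V)).Connected ∧ v ∈ S := fun S hS => by
    simpa [connectedSetsOfCard, and_assoc] using hS
  calc _ = ∑ S ∈ connectedSetsOfCard G k with v ∈ S, q ^ #S * (1 - q) ^ #(outerBoundary G S) :=
        sum_congr rfl fun S hS => by rw [(hmem S hS).1]
    _ ≤ 1 := by
      refine sum_pow_mul_one_sub_pow_le_one hq0 hq1 _ id (outerBoundary G)
        (fun S _ => disjoint_outerBoundary S) fun S hS T hT hST => ?_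
      obtain ⟨-, hSconn, hvS⟩ := hmem S hS
      obtain ⟨-, hTconn, hvT⟩ := hmem T hT
      refine disjoint_left.mpr fun ω hωS hωT => hST ?_
      obtain ⟨hSω, hωS⟩ := mem_Icc.mp hωS
      obtain ⟨hTω, hωT⟩ := mem_Icc.mp hωT
      exact (subset_of_connected_of_disjoint_outerBoundary hSconn hvS hvT
        (subset_compl_iff_disjoint_right.mp (hSω.trans hωT))).antisymm
        (subset_of_connected_of_disjoint_outerBoundary hTconn hvT hvS
        (subset_compl_iff_disjoint_right.mp (hTω.trans hωS)))

theorem card_connectedSetsOfCard_filter_mem_le {Δ : ℕ} (hdeg : ∀ v, G.degree v ≤ Δ) (hΔ : 1 ≤ Δ)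
    (v : V) (k : ℕ) : (#{S ∈ connectedSetsOfCard G k | v ∈ S} : ℝ) ≤ (Δ * Real.exp 1) ^ k := by
  have hΔ' : (1 : ℝ) ≤ Δ := by exact_mod_cast hΔ
  have hΔe : 1 ≤ (Δ : ℝ) * Real.exp 1 :=
    one_le_mul_of_one_le_of_one_le hΔ' (Real.one_le_exp zero_le_one)
  have hmem : ∀ S ∈ {S ∈ connectedSetsOfCard G k | v ∈ S},
      #S = k ∧ (G.induce (S : Set V)).Connected ∧ v ∈ S := fun S hS => by
    simpa [connectedSetsOfCard, and_assoc] using hS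
  rcases le_or_gt k 1 with hk | hk
  · have hsub : {S ∈ connectedSetsOfCard G k | v ∈ S} ⊆ {{v}} := fun S hS => by
      obtain ⟨hSk, -, hvS⟩ := hmem S hS
      exact mem_singleton.mpr (eq_singleton_iff_unique_mem.mpr
        ⟨hvS, fun w hw => card_le_one.mp (hSk ▸ hk) w hw v hvS⟩)
    calc _ ≤ (1 : ℝ) := by exact_mod_cast (card_le_card hsub).trans (card_singleton _).le
      _ ≤ _ := one_le_pow₀ hΔe
  set q : ℝ := (Δ : ℝ)⁻¹
  have hq0 : 0 ≤ q := by positivity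
  have hq1 : q ≤ 1 := inv_le_one_of_one_le₀ hΔ'
  have hterm : ∀ S ∈ {S ∈ connectedSetsOfCard G k | v ∈ S},
      ((Δ * Real.exp 1)⁻¹) ^ k ≤ q ^ k * (1 - q) ^ #(outerBoundary G S) := by
    intro S hS
    obtain ⟨hSk, hSconn, -⟩ := hmem S hS
    calc ((Δ * Real.exp 1)⁻¹) ^ k ≤ (q * (1 - q) ^ (Δ - 1)) ^ k := by
          gcongr
          rw [mul_inv]
          gcongr
          simpa [Real.exp_neg] using exp_neg_one_le_one_sub_inv_pow Δ
      _ ≤ q ^ k * (1 - q) ^ #(outerBoundary G S) := by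
          rw [mul_pow, ← pow_mul]
          refine mul_le_mul_of_nonneg_left
            (pow_le_pow_of_le_one (by linarith) (by linarith) ?_) (by positivity)
          calc #(outerBoundary G S) ≤ (Δ - 1) * #S := card_outerBoundary_le hdeg hSconn (by omega)
            _ = (Δ - 1) * k := by rw [hSk]
  have := (card_nsmul_le_sum _ _ _ hterm).trans (sum_connectedSetsOfCard_weight_le_one hq0 hq1 v k)
  rwa [nsmul_eq_mul, inv_pow, ← div_eq_mul_inv, div_le_one (by positivity)] at this

theorem mul_card_connectedSetsOfCard_le {Δ : ℕ} (hdeg : ∀ v, G.degree v ≤ Δ) (hΔ : 1 ≤ Δ) (k : ℕ) :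
    (k : ℝ) * #(connectedSetsOfCard G k) ≤ Fintype.card V * (Δ * Real.exp 1) ^ k := by
  have hcard : ∀ S ∈ connectedSetsOfCard G k, #S = k := fun S hS => by
    simp only [connectedSetsOfCard, mem_filter] at hS
    exact hS.2.1
  calc (k : ℝ) * #(connectedSetsOfCard G k) = ∑ S ∈ connectedSetsOfCard G k, (#S : ℝ) := by
        rw [sum_congr rfl fun S hS => congrArg Nat.cast (hcard S hS), sum_const, nsmul_eq_mul,
          mul_comm]
    _ = ∑ v, (#{S ∈ connectedSetsOfCard G k | v ∈ S} : ℝ) := by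
        exact_mod_cast sum_card_eq_sum_card_filter_mem _
    _ ≤ ∑ _v : V, ((Δ : ℝ) * Real.exp 1) ^ k :=
        sum_le_sum fun v _ => card_connectedSetsOfCard_filter_mem_le hdeg hΔ v k
    _ = Fintype.card V * (Δ * Real.exp 1) ^ k := by rw [sum_const, card_univ, nsmul_eq_mul]

theorem card_connectedSetsOfCard_le [Nonempty V] {Δ : ℕ} (hdeg : ∀ v, G.degree v ≤ Δ)
    (hΔ : 1 ≤ Δ) {c : ℝ} {k : ℕ} (hk : c * Fintype.card V ≤ k) :
    c * #(connectedSetsOfCard G k) ≤ (Δ * Real.exp 1) ^ k := by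
  have hn : (0 : ℝ) < Fintype.card V := by exact_mod_cast Fintype.card_pos
  refine le_of_mul_le_mul_left ?_ hn
  calc Fintype.card V * (c * #(connectedSetsOfCard G k))
      = c * Fintype.card V * #(connectedSetsOfCard G k) := by ring
    _ ≤ k * #(connectedSetsOfCard G k) := by gcongr
    _ ≤ Fintype.card V * (Δ * Real.exp 1) ^ k := mul_card_connectedSetsOfCard_le hdeg hΔ k

theorem sum_pow_card_le [Nonempty V] {Δ : ℕ} (hdeg : ∀ v, G.degree v ≤ Δ) (hΔ : 1 ≤ Δ)
    {c y : ℝ} (hc : 0 < c) (hy : 0 ≤ y) {𝒮 : Finset (Finset V)}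
    (h𝒮 : ∀ S ∈ 𝒮, c * Fintype.card V ≤ #S ∧ (G.induce (S : Set V)).Connected) :
    ∑ S ∈ 𝒮, y ^ #S
      ≤ c⁻¹ * ∑ k ∈ Icc ⌈c * Fintype.card V⌉₊ (Fintype.card V), (Δ * Real.exp 1 * y) ^ k := by
  have hmaps : ∀ S ∈ 𝒮, #S ∈ Icc ⌈c * Fintype.card V⌉₊ (Fintype.card V) := fun S hS =>
    mem_Icc.mpr ⟨Nat.ceil_le.mpr (h𝒮 S hS).1, card_le_univ S⟩
  rw [← sum_fiberwise_of_maps_to hmaps, mul_sum]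
  refine sum_le_sum fun k hk => ?_
  have hsub : {S ∈ 𝒮 | #S = k} ⊆ connectedSetsOfCard G k := fun S hS => by
    obtain ⟨hS𝒮, hSk⟩ := mem_filter.mp hS
    simpa [connectedSetsOfCard] using ⟨hSk, (h𝒮 S hS𝒮).2⟩
  calc ∑ S ∈ 𝒮 with #S = k, y ^ #S = #{S ∈ 𝒮 | #S = k} * y ^ k := by
        rw [sum_congr rfl fun S hS => by rw [(mem_filter.mp hS).2], sum_const, nsmul_eq_mul]
    _ ≤ #(connectedSetsOfCard G k) * y ^ k := by gcongr
    _ ≤ c⁻¹ * (Δ * Real.exp 1) ^ k * y ^ k := by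
        gcongr
        rw [le_inv_mul_iff₀ hc]
        exact card_connectedSetsOfCard_le hdeg hΔ (Nat.ceil_le.mp (mem_Icc.mp hk).1)
    _ = c⁻¹ * (Δ * Real.exp 1 * y) ^ k := by ring

end Counting

section Components

variable [Fintype V]

def componentFinset (F : Finset (Sym2 V)) (v : V) : Finset V :=
  {w | (SimpleGraph.fromEdgeSet (F : Set (Sym2 V))).Reachable v w}

def edgeBoundaryFinset (G : SimpleGraph V) (S : Finset V) : Finset (Sym2 V) :=
  (edgeBoundary G S).toFinset

variable {G : SimpleGraph V}

theorem card_componentFinset (F : Finset (Sym2 V)) (v : V) :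
    #(componentFinset F v) = compCard F v := by
  rw [compCard, ← Set.ncard_coe_finset]
  congr
  ext
  simp [componentFinset]

theorem connected_induce_componentFinset [DecidableEq V] [DecidableRel G.Adj]
    {F : Finset (Sym2 V)} (hF : F ⊆ G.edgeFinset) (v : V) :
    (G.induce (componentFinset F v : Set V)).Connected := by
  set H := SimpleGraph.fromEdgeSet (F : Set (Sym2 V))
  have hHG : H ≤ G := (SimpleGraph.fromEdgeSet_le G).mpr fun e he => by
    simpa using hF he.1
  have hsupp : (componentFinset F v : Set V) = (H.connectedComponentMk v).supp := by
    ext w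
    simp [componentFinset, SimpleGraph.ConnectedComponent.eq, SimpleGraph.reachable_comm, H]
  rw [hsupp]
  exact (H.connectedComponentMk v).connected_toSimpleGraph.mono fun _ _ h => hHG h

theorem disjoint_edgeBoundaryFinset_componentFinset (F : Finset (Sym2 V)) (v : V) :
    Disjoint F (edgeBoundaryFinset G (componentFinset F v)) := by
  refine disjoint_left.mpr fun e heF heB => ?_
  obtain ⟨heG, u, w, rfl, hu, hw⟩ : e ∈ edgeBoundary G (componentFinset F v) := by
    simpa [edgeBoundaryFinset] using heB
  apply hw
  simp only [componentFinset, coe_filter, mem_univ, true_and, Set.mem_ofPred_eq] at hu ⊢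
  exact hu.trans ((SimpleGraph.fromEdgeSet_adj _).mpr ⟨heF, G.ne_of_adj heG⟩).reachable

theorem edgeBoundaryFinset_subset [DecidableRel G.Adj] (S : Finset V) :
    edgeBoundaryFinset G S ⊆ G.edgeFinset :=
  fun e he => by simpa using (Set.mem_toFinset.mp he).1

theorem pow_card_edgeBoundaryFinset_le {b : ℝ} (hexp : EdgeExpander G b) {S : Finset V}
    (hS0 : 0 < #S) (hSn : (#S : ℝ) ≤ Fintype.card V / 2) {a : ℝ} (ha0 : 0 < a) (ha1 : a ≤ 1) :
    a ^ #(edgeBoundaryFinset G S) ≤ (a ^ b) ^ #S := by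
  rw [← Real.rpow_natCast, ← Real.rpow_natCast, ← Real.rpow_mul ha0.le, edgeBoundaryFinset,
    ← Set.ncard_eq_toFinset_card']
  exact Real.rpow_le_rpow_of_exponent_ge ha0 ha1 (mul_comm b _ ▸ hexp S hS0 hSn)

theorem one_le_of_edgeExpander [DecidableRel G.Adj] {b : ℝ} (hb : 0 < b)
    (hexp : EdgeExpander G b) {Δ : ℕ} (hdeg : ∀ v, G.degree v ≤ Δ) {S : Finset V} (hS0 : 0 < #S)
    (hSn : (#S : ℝ) ≤ Fintype.card V / 2) : 1 ≤ Δ := by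
  have hpos : (0 : ℝ) < (edgeBoundary G S).ncard :=
    (mul_pos hb (by exact_mod_cast hS0)).trans_le (hexp S hS0 hSn)
  obtain ⟨e, heG, u, w, rfl, -, -⟩ := Set.nonempty_of_ncard_ne_zero (by exact_mod_cast hpos.ne')
  exact ((G.degree_pos_iff_exists_adj u).mpr ⟨w, heG⟩).trans_le (hdeg u)

def middleConnectedSets (G : SimpleGraph V) (c : ℝ) : Finset (Finset V) :=
  {S | c * Fintype.card V ≤ #S ∧ (#S : ℝ) ≤ Fintype.card V / 2 ∧ (G.induce (S : Set V)).Connected}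

theorem mem_middleConnectedSets {c : ℝ} {S : Finset V} :
    S ∈ middleConnectedSets G c ↔ c * Fintype.card V ≤ #S ∧ (#S : ℝ) ≤ Fintype.card V / 2 ∧
      (G.induce (S : Set V)).Connected := by
  simp [middleConnectedSets]

theorem exists_mem_middleConnectedSets_disjoint [DecidableEq V] [DecidableRel G.Adj] {c : ℝ}
    {F : Finset (Sym2 V)} (hF : F ⊆ G.edgeFinset)
    (hmid : ∃ v : V, c * Fintype.card V ≤ (compCard F v : ℝ) ∧
      (compCard F v : ℝ) ≤ (Fintype.card V : ℝ) / 2) :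
    ∃ S ∈ middleConnectedSets G c, Disjoint F (edgeBoundaryFinset G S) := by
  obtain ⟨v, hv1, hv2⟩ := hmid
  refine ⟨componentFinset F v, ?_, disjoint_edgeBoundaryFinset_componentFinset F v⟩
  rw [mem_middleConnectedSets, card_componentFinset]
  exact ⟨hv1, hv2, connected_induce_componentFinset hF v⟩

end Components

theorem no_middle_sized_component
    (b : ℝ) (hb : 0 < b) (Δ : ℕ)
    (V : Type) [Fintype V] [DecidableEq V] (G : SimpleGraph V) [DecidableRel G.Adj]
    (hdeg : ∀ v, G.degree v ≤ Δ)
    (hexp : EdgeExpander G b)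
    (A : ℝ) (hA : 0 < A) (hAb : (Δ : ℝ) * Real.exp 1 * A ^ b < 1)
    (c : ℝ) (hc : 0 < c)
    (p : ℝ) (hp : p ∈ Set.Icc (1 - A) 1) :
    percProb G p {F | ∃ v : V, c * Fintype.card V ≤ (compCard F v : ℝ) ∧
        (compCard F v : ℝ) ≤ (Fintype.card V : ℝ) / 2}
      ≤ (1 / c) * ((Δ : ℝ) * Real.exp 1 * A ^ b) ^ (c * Fintype.card V)
          / (1 - (Δ : ℝ) * Real.exp 1 * A ^ b) := by
  set x : ℝ := Δ * Real.exp 1 * A ^ b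
  obtain h | ⟨S₀, hS₀⟩ := (middleConnectedSets G c).eq_empty_or_nonempty
  · rw [percProb_eq_zero G fun F hF hmid => by
      simpa [h] using exists_mem_middleConnectedSets_disjoint hF hmid]
    exact div_nonneg (by positivity) (by linarith)
  -- a middle-sized set forces `1 ≤ Δ`, hence `A ≤ 1` and `0 ≤ p`
  obtain ⟨-, hS₀n, hS₀conn⟩ := mem_middleConnectedSets.mp hS₀
  have hS₀pos := card_pos_of_connected_induce hS₀conn
  obtain ⟨v₀, -⟩ := card_pos.mp hS₀pos
  have : Nonempty V := ⟨v₀⟩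
  have hΔ : 1 ≤ Δ := one_le_of_edgeExpander hb hexp hdeg hS₀pos hS₀n
  have hA1 : A ≤ 1 := by
    by_contra! hA1
    have hΔe : 1 ≤ (Δ : ℝ) * Real.exp 1 :=
      one_le_mul_of_one_le_of_one_le (by exact_mod_cast hΔ) (Real.one_le_exp zero_le_one)
    nlinarith [Real.one_le_rpow hA1.le hb.le]
  obtain ⟨hpA, hp1⟩ := hp
  calc percProb G p _
      ≤ ∑ S ∈ middleConnectedSets G c, percProb G p {F | Disjoint F (edgeBoundaryFinset G S)} :=
        percProb_le_sum G (by linarith) hp1 _ _ _ fun _ hF =>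
          exists_mem_middleConnectedSets_disjoint hF
    _ = ∑ S ∈ middleConnectedSets G c, (1 - p) ^ #(edgeBoundaryFinset G S) :=
        sum_congr rfl fun S _ => percProb_disjoint G p (edgeBoundaryFinset_subset S)
    _ ≤ ∑ S ∈ middleConnectedSets G c, (A ^ b) ^ #S := sum_le_sum fun S hS => by
        obtain ⟨-, hSn, hSconn⟩ := mem_middleConnectedSets.mp hS
        exact (pow_le_pow_left₀ (by linarith) (by linarith) _).trans
          (pow_card_edgeBoundaryFinset_le hexp (card_pos_of_connected_induce hSconn) hSn hA hA1)
    _ ≤ c⁻¹ * ∑ k ∈ Icc ⌈c * Fintype.card V⌉₊ (Fintype.card V), x ^ k :=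
        sum_pow_card_le hdeg hΔ hc (by positivity) fun S hS =>
          (mem_middleConnectedSets.mp hS).imp_right And.right
    _ ≤ c⁻¹ * (x ^ (c * Fintype.card V) / (1 - x)) := by
        gcongr
        exact sum_Icc_pow_le_rpow_div (by positivity) hAb _ _
    _ = _ := by rw [one_div, mul_div_assoc]

end
end

section
/- Let x ∈ (0, 1/2]. Then there exists α > 0 such that the following holds for every nonempty finite set E, every up-set 𝒜 ⊆ 𝒫(E), and every p ∈ [x, 1−x]: if A ⊆ E is formed by including each element of E independently with probability p and e ∈ E is chosen uniformly at random, independently of A, then the probability that e is A-pivotal for 𝒜 is at most α/√|E|; equivalently, (1/|E|) · ∑_{e∈E} ∑_{A⊆E, e A-pivotal} p^{|A|}(1−p)^{|E|−|A|} ≤ α/√|E|. -/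
open Filter Topology
open scoped Classical

noncomputable section

variable {V : Type*}

set_option linter.unusedSectionVars false

namespace PivotalAux

variable {ι : Type} [Fintype ι] [DecidableEq ι]

noncomputable def w (p : ℝ) (s A : Finset ι) : ℝ :=
  p ^ A.card * (1 - p) ^ (s.card - A.card)

noncomputable def chi (e : ι) (A : Finset ι) : ℝ := if e ∈ A then 1 else 0

noncomputable def fA (𝒜 : Set (Finset ι)) (A : Finset ι) : ℝ := if A ∈ 𝒜 then 1 else 0

noncomputable def piv (𝒜 : Set (Finset ι)) (e : ι) (A : Finset ι) : ℝ :=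
  if insert e A ∈ 𝒜 ∧ A.erase e ∉ 𝒜 then 1 else 0

lemma w_sum (p : ℝ) (s : Finset ι) : ∑ A ∈ s.powerset, w p s A = 1 := by
  have h := Finset.prod_add (fun _ : ι => p) (fun _ : ι => 1 - p) s
  simp only [Finset.prod_const] at h
  have h1 : p + (1 - p) = 1 := by ring
  rw [h1, one_pow] at h
  calc ∑ A ∈ s.powerset, w p s A
      = ∑ A ∈ s.powerset, p ^ A.card * (1 - p) ^ (s \ A).card := by
        refine Finset.sum_congr rfl fun A hA => ?_
        rw [w, Finset.card_sdiff_of_subset (Finset.mem_powerset.mp hA)]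
    _ = 1 := h.symm

lemma w_not_mem (p : ℝ) {s B : Finset ι} {e : ι} (he : e ∉ s) (hB : B ⊆ s) :
    w p (insert e s) B = (1 - p) * w p s B := by
  have hc : B.card ≤ s.card := Finset.card_le_card hB
  rw [w, w, Finset.card_insert_of_notMem he,
    show s.card + 1 - B.card = (s.card - B.card) + 1 from by omega]
  ring

lemma w_mem (p : ℝ) {s B : Finset ι} {e : ι} (he : e ∉ s) (hB : B ⊆ s) :
    w p (insert e s) (insert e B) = p * w p s B := by
  have heB : e ∉ B := fun h => he (hB h)
  have hc : B.card ≤ s.card := Finset.card_le_card hB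
  rw [w, w, Finset.card_insert_of_notMem he, Finset.card_insert_of_notMem heB,
    show s.card + 1 - (B.card + 1) = s.card - B.card from by omega]
  ring

lemma w_split (p : ℝ) {s : Finset ι} {e : ι} (he : e ∉ s) (h : Finset ι → ℝ) :
    ∑ A ∈ (insert e s).powerset, w p (insert e s) A * h A
      = ∑ B ∈ s.powerset, w p s B * ((1 - p) * h B + p * h (insert e B)) := by
  rw [Finset.sum_powerset_insert he, ← Finset.sum_add_distrib]
  refine Finset.sum_congr rfl fun B hB => ?_
  have hBs := Finset.mem_powerset.mp hB
  rw [w_not_mem p he hBs, w_mem p he hBs]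
  ring

lemma w_split' (p : ℝ) {s : Finset ι} {e : ι} (he : e ∈ s) (h : Finset ι → ℝ) :
    ∑ A ∈ s.powerset, w p s A * h A
      = ∑ B ∈ (s.erase e).powerset,
          w p (s.erase e) B * ((1 - p) * h B + p * h (insert e B)) := by
  conv_lhs => rw [← Finset.insert_erase he]
  exact w_split p (Finset.notMem_erase e s) h

lemma sum_w_chi (p : ℝ) {s : Finset ι} {e : ι} (he : e ∈ s) :
    ∑ A ∈ s.powerset, w p s A * chi e A = p := by
  rw [w_split' p he]
  have key : ∀ B ∈ (s.erase e).powerset,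
      w p (s.erase e) B * ((1 - p) * chi e B + p * chi e (insert e B))
        = p * w p (s.erase e) B := by
    intro B hB
    have heB : e ∉ B := fun h =>
      Finset.notMem_erase e s (Finset.mem_powerset.mp hB h)
    simp [chi, heB]
    ring
  rw [Finset.sum_congr rfl key, ← Finset.mul_sum, w_sum, mul_one]

lemma sum_w_chi2 (p : ℝ) {s : Finset ι} {e e' : ι} (he : e ∈ s) (he' : e' ∈ s)
    (hne : e ≠ e') :
    ∑ A ∈ s.powerset, w p s A * (chi e A * chi e' A) = p * p := by
  rw [w_split' p he]
  have key : ∀ B ∈ (s.erase e).powerset,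
      w p (s.erase e) B * ((1 - p) * (chi e B * chi e' B)
          + p * (chi e (insert e B) * chi e' (insert e B)))
        = p * (w p (s.erase e) B * chi e' B) := by
    intro B hB
    have heB : e ∉ B := fun h =>
      Finset.notMem_erase e s (Finset.mem_powerset.mp hB h)
    have hm : e' ∈ insert e B ↔ e' ∈ B := by
      simp [Finset.mem_insert, hne.symm]
    by_cases h' : e' ∈ B <;> simp [chi, heB, h', hm] <;> ring
  rw [Finset.sum_congr rfl key, ← Finset.mul_sum,
    sum_w_chi p (Finset.mem_erase.mpr ⟨hne.symm, he'⟩)]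

lemma cov_eq (p : ℝ) (𝒜 : Set (Finset ι))
    (hup : ∀ A B : Finset ι, A ∈ 𝒜 → A ⊆ B → B ∈ 𝒜) (e : ι) :
    ∑ A ∈ Finset.univ.powerset, w p Finset.univ A * (fA 𝒜 A * (chi e A - p))
      = (p * (1 - p)) * ∑ A ∈ Finset.univ.powerset, w p Finset.univ A * piv 𝒜 e A := by
  rw [w_split' p (Finset.mem_univ e), w_split' p (Finset.mem_univ e) (piv 𝒜 e),
    Finset.mul_sum]
  refine Finset.sum_congr rfl fun B hB => ?_
  have heB : e ∉ B := fun h =>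
    Finset.notMem_erase e Finset.univ (Finset.mem_powerset.mp hB h)
  have hchi0 : chi e B = 0 := by simp [chi, heB]
  have hchi1 : chi e (insert e B) = 1 := by simp [chi]
  have hpiv2 : piv 𝒜 e (insert e B) = piv 𝒜 e B := by
    rw [piv, piv, Finset.insert_idem, Finset.erase_insert heB,
      Finset.erase_eq_of_notMem heB]
  have hpiv : piv 𝒜 e B = fA 𝒜 (insert e B) - fA 𝒜 B := by
    rw [piv, fA, fA, Finset.erase_eq_of_notMem heB]
    by_cases hBm : B ∈ 𝒜
    · have hI : insert e B ∈ 𝒜 := hup B _ hBm (Finset.subset_insert e B)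
      simp [hBm, hI]
    · by_cases hI : insert e B ∈ 𝒜 <;> simp [hBm, hI]
  rw [hpiv2, hpiv, hchi0, hchi1]
  ring

lemma card_eq_sum_chi (p : ℝ) (A : Finset ι) :
    ((A.card : ℝ) - p * (Fintype.card ι : ℝ)) = ∑ e : ι, (chi e A - p) := by
  have h1 : ∑ e : ι, chi e A = (A.card : ℝ) := by
    rw [show (fun e => chi e A) = fun e => if e ∈ A then (1:ℝ) else 0 from rfl]
    rw [Finset.sum_ite_mem, Finset.univ_inter, Finset.sum_const, nsmul_eq_mul, mul_one]
  rw [Finset.sum_sub_distrib, h1, Finset.sum_const, Finset.card_univ, nsmul_eq_mul]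
  ring

lemma cross (p : ℝ) (e e' : ι) :
    ∑ A ∈ Finset.univ.powerset, w p Finset.univ A * ((chi e A - p) * (chi e' A - p))
      = if e = e' then p * (1 - p) else 0 := by
  have hμ := w_sum p (Finset.univ : Finset ι)
  have hχ : ∀ e₀ : ι, ∑ A ∈ Finset.univ.powerset, w p Finset.univ A * chi e₀ A = p :=
    fun e₀ => sum_w_chi p (Finset.mem_univ e₀)
  by_cases h : e = e'
  · subst h
    have key : ∀ A ∈ Finset.univ.powerset,
        w p Finset.univ A * ((chi e A - p) * (chi e A - p))
          = (1 - 2 * p) * (w p Finset.univ A * chi e A) + p ^ 2 * w p Finset.univ A := by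
      intro A _
      by_cases hA : e ∈ A <;> simp [chi, hA] <;> ring
    rw [Finset.sum_congr rfl key, Finset.sum_add_distrib, ← Finset.mul_sum,
      ← Finset.mul_sum, hχ, hμ, if_pos rfl]
    ring
  · have key : ∀ A ∈ Finset.univ.powerset,
        w p Finset.univ A * ((chi e A - p) * (chi e' A - p))
          = w p Finset.univ A * (chi e A * chi e' A) - p * (w p Finset.univ A * chi e A)
            - p * (w p Finset.univ A * chi e' A) + p ^ 2 * w p Finset.univ A := by
      intro A _; ring
    rw [Finset.sum_congr rfl key, Finset.sum_add_distrib, Finset.sum_sub_distrib,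
      Finset.sum_sub_distrib, ← Finset.mul_sum, ← Finset.mul_sum, ← Finset.mul_sum,
      sum_w_chi2 p (Finset.mem_univ e) (Finset.mem_univ e') h, hχ, hχ, hμ, if_neg h]
    ring


lemma var_card (p : ℝ) :
    ∑ A ∈ (Finset.univ : Finset ι).powerset,
        w p Finset.univ A * ((A.card : ℝ) - p * (Fintype.card ι : ℝ)) ^ 2
      = (Fintype.card ι : ℝ) * (p * (1 - p)) := by
  have key : ∀ A ∈ (Finset.univ : Finset ι).powerset,
      w p Finset.univ A * ((A.card : ℝ) - p * (Fintype.card ι : ℝ)) ^ 2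
        = ∑ e : ι, ∑ e' : ι, w p Finset.univ A * ((chi e A - p) * (chi e' A - p)) := by
    intro A _
    rw [card_eq_sum_chi p A, sq, Finset.sum_mul_sum]
    rw [Finset.mul_sum]
    refine Finset.sum_congr rfl fun e _ => ?_
    rw [Finset.mul_sum]
  rw [Finset.sum_congr rfl key, Finset.sum_comm]
  have key2 : ∀ e : ι,
      ∑ A ∈ (Finset.univ : Finset ι).powerset,
        ∑ e' : ι, w p Finset.univ A * ((chi e A - p) * (chi e' A - p))
      = p * (1 - p) := by
    intro e
    rw [Finset.sum_comm]
    have : ∀ e' : ι, e' ∈ (Finset.univ : Finset ι) →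
        ∑ A ∈ (Finset.univ : Finset ι).powerset,
          w p Finset.univ A * ((chi e A - p) * (chi e' A - p))
        = if e = e' then p * (1 - p) else 0 := fun e' _ => cross p e e'
    rw [Finset.sum_congr rfl this, Finset.sum_ite_eq Finset.univ e fun _ => p * (1 - p)]
    simp
  rw [Finset.sum_congr rfl fun e _ => key2 e, Finset.sum_const, Finset.card_univ,
    nsmul_eq_mul]

lemma mean_card (p : ℝ) :
    ∑ A ∈ (Finset.univ : Finset ι).powerset,
        w p Finset.univ A * ((A.card : ℝ) - p * (Fintype.card ι : ℝ)) = 0 := by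
  have key : ∀ A ∈ (Finset.univ : Finset ι).powerset,
      w p Finset.univ A * ((A.card : ℝ) - p * (Fintype.card ι : ℝ))
        = ∑ e : ι, (w p Finset.univ A * chi e A - p * w p Finset.univ A) := by
    intro A _
    rw [card_eq_sum_chi p A, Finset.mul_sum]
    refine Finset.sum_congr rfl fun e _ => ?_
    ring
  rw [Finset.sum_congr rfl key, Finset.sum_comm]
  have key2 : ∀ e : ι, ∑ A ∈ (Finset.univ : Finset ι).powerset,
      (w p Finset.univ A * chi e A - p * w p Finset.univ A) = 0 := by
    intro e
    rw [Finset.sum_sub_distrib, sum_w_chi p (Finset.mem_univ e), ← Finset.mul_sum,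
      w_sum, mul_one, sub_self]
  rw [Finset.sum_congr rfl fun e _ => key2 e, Finset.sum_const]
  simp

lemma cov_total (p : ℝ) (𝒜 : Set (Finset ι))
    (hup : ∀ A B : Finset ι, A ∈ 𝒜 → A ⊆ B → B ∈ 𝒜) :
    ∑ A ∈ (Finset.univ : Finset ι).powerset,
        w p Finset.univ A * (fA 𝒜 A * ((A.card : ℝ) - p * (Fintype.card ι : ℝ)))
      = (p * (1 - p)) *
        ∑ e : ι, ∑ A ∈ (Finset.univ : Finset ι).powerset, w p Finset.univ A * piv 𝒜 e A := by
  have key : ∀ A ∈ (Finset.univ : Finset ι).powerset,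
      w p Finset.univ A * (fA 𝒜 A * ((A.card : ℝ) - p * (Fintype.card ι : ℝ)))
        = ∑ e : ι, w p Finset.univ A * (fA 𝒜 A * (chi e A - p)) := by
    intro A _
    rw [card_eq_sum_chi p A, Finset.mul_sum, Finset.mul_sum]
  rw [Finset.sum_congr rfl key, Finset.sum_comm,
    Finset.sum_congr rfl fun e _ => cov_eq p 𝒜 hup e, ← Finset.mul_sum]

lemma sq_bound [Nonempty ι] (p : ℝ) (hp0 : 0 < p) (hp1 : p < 1) (𝒜 : Set (Finset ι))
    (hup : ∀ A B : Finset ι, A ∈ 𝒜 → A ⊆ B → B ∈ 𝒜) :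
    (∑ e : ι, ∑ A ∈ (Finset.univ : Finset ι).powerset,
        w p Finset.univ A * piv 𝒜 e A) ^ 2
      ≤ (Fintype.card ι : ℝ) / (4 * (p * (1 - p))) := by
  set n : ℝ := (Fintype.card ι : ℝ) with hn
  set q : ℝ := p * (1 - p) with hqdef
  have hq : 0 < q := by nlinarith
  set S : ℝ := ∑ e : ι, ∑ A ∈ (Finset.univ : Finset ι).powerset,
    w p Finset.univ A * piv 𝒜 e A with hSdef
  set t : ℝ := ∑ A ∈ (Finset.univ : Finset ι).powerset,
    w p Finset.univ A * fA 𝒜 A with htdef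
  have hw_nn : ∀ A : Finset ι, 0 ≤ w p Finset.univ A := fun A =>
    mul_nonneg (pow_nonneg hp0.le _) (pow_nonneg (by linarith) _)
  -- centered covariance
  have centered : ∑ A ∈ (Finset.univ : Finset ι).powerset,
      w p Finset.univ A * ((fA 𝒜 A - t) * ((A.card : ℝ) - p * n)) = q * S := by
    have key : ∀ A ∈ (Finset.univ : Finset ι).powerset,
        w p Finset.univ A * ((fA 𝒜 A - t) * ((A.card : ℝ) - p * n))
          = w p Finset.univ A * (fA 𝒜 A * ((A.card : ℝ) - p * n))
            - t * (w p Finset.univ A * ((A.card : ℝ) - p * n)) := by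
      intro A _; ring
    rw [Finset.sum_congr rfl key, Finset.sum_sub_distrib, ← Finset.mul_sum,
      cov_total p 𝒜 hup, mean_card p, mul_zero, sub_zero]
  -- variance of f
  have varf : ∑ A ∈ (Finset.univ : Finset ι).powerset,
      w p Finset.univ A * (fA 𝒜 A - t) ^ 2 = t - t ^ 2 := by
    have key : ∀ A ∈ (Finset.univ : Finset ι).powerset,
        w p Finset.univ A * (fA 𝒜 A - t) ^ 2
          = (1 - 2 * t) * (w p Finset.univ A * fA 𝒜 A)
            + t ^ 2 * w p Finset.univ A := by
      intro A _
      have hff : fA 𝒜 A * fA 𝒜 A = fA 𝒜 A := by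
        rw [fA]; by_cases h : A ∈ 𝒜 <;> simp [h]
      linear_combination (w p Finset.univ A) * hff
    rw [Finset.sum_congr rfl key, Finset.sum_add_distrib, ← Finset.mul_sum,
      ← Finset.mul_sum, ← htdef, w_sum]
    ring
  -- Cauchy–Schwarz
  have CS := Finset.sum_mul_sq_le_sq_mul_sq (Finset.univ : Finset ι).powerset
    (fun A => Real.sqrt (w p Finset.univ A) * (fA 𝒜 A - t))
    (fun A => Real.sqrt (w p Finset.univ A) * ((A.card : ℝ) - p * n))
  have e1 : ∀ A ∈ (Finset.univ : Finset ι).powerset,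
      (Real.sqrt (w p Finset.univ A) * (fA 𝒜 A - t))
        * (Real.sqrt (w p Finset.univ A) * ((A.card : ℝ) - p * n))
      = w p Finset.univ A * ((fA 𝒜 A - t) * ((A.card : ℝ) - p * n)) := by
    intro A _
    have h := Real.mul_self_sqrt (hw_nn A)
    linear_combination ((fA 𝒜 A - t) * ((A.card : ℝ) - p * n)) * h
  have e2 : ∀ A ∈ (Finset.univ : Finset ι).powerset,
      (Real.sqrt (w p Finset.univ A) * (fA 𝒜 A - t)) ^ 2
        = w p Finset.univ A * (fA 𝒜 A - t) ^ 2 := by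
    intro A _
    rw [mul_pow, Real.sq_sqrt (hw_nn A)]
  have e3 : ∀ A ∈ (Finset.univ : Finset ι).powerset,
      (Real.sqrt (w p Finset.univ A) * ((A.card : ℝ) - p * n)) ^ 2
        = w p Finset.univ A * ((A.card : ℝ) - p * n) ^ 2 := by
    intro A _
    rw [mul_pow, Real.sq_sqrt (hw_nn A)]
  rw [Finset.sum_congr rfl e1, Finset.sum_congr rfl e2, Finset.sum_congr rfl e3,
    centered, varf, var_card p] at CS
  -- CS : (q * S) ^ 2 ≤ (t - t ^ 2) * (n * q)
  have ht4 : t - t ^ 2 ≤ 1 / 4 := by nlinarith [sq_nonneg (t - 1 / 2)]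
  have hnq : 0 ≤ n * q := by
    have : (0:ℝ) ≤ n := Nat.cast_nonneg _
    positivity
  have CS2 : (q * S) ^ 2 ≤ 1 / 4 * (n * q) :=
    CS.trans (mul_le_mul_of_nonneg_right ht4 hnq)
  rw [le_div_iff₀ (by positivity)]
  nlinarith [CS2, hq, sq_nonneg S]

end PivotalAux

theorem pivotal_probability_bound (x : ℝ) (hx : x ∈ Set.Ioc (0 : ℝ) (1 / 2)) :
    ∃ α > (0 : ℝ), ∀ (ι : Type) [Fintype ι] [DecidableEq ι] [Nonempty ι]
      (𝒜 : Set (Finset ι)),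
      (∀ A B : Finset ι, A ∈ 𝒜 → A ⊆ B → B ∈ 𝒜) →
      ∀ p ∈ Set.Icc x (1 - x),
      (1 / (Fintype.card ι : ℝ)) * ∑ e : ι, ∑ A ∈ (Finset.univ : Finset ι).powerset,
          (if insert e A ∈ 𝒜 ∧ A.erase e ∉ 𝒜
            then p ^ A.card * (1 - p) ^ (Fintype.card ι - A.card) else 0)
        ≤ α / Real.sqrt (Fintype.card ι) := by
  obtain ⟨hx0, hx2⟩ := hx
  have hq0 : 0 < x * (1 - x) := by nlinarith
  have hsq0 : 0 < Real.sqrt (x * (1 - x)) := Real.sqrt_pos.mpr hq0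
  refine ⟨1 / (2 * Real.sqrt (x * (1 - x))), by positivity, ?_⟩
  intro ι _ _ _ 𝒜 hup p hp
  obtain ⟨hpx, hpy⟩ := hp
  have hp0 : 0 < p := lt_of_lt_of_le hx0 hpx
  have hp1 : p < 1 := lt_of_le_of_lt hpy (by linarith)
  have hn1 : 0 < Fintype.card ι := Fintype.card_pos
  have hn0 : (0 : ℝ) < (Fintype.card ι : ℝ) := by exact_mod_cast hn1
  have hrw : (∑ e : ι, ∑ A ∈ (Finset.univ : Finset ι).powerset,
      (if insert e A ∈ 𝒜 ∧ A.erase e ∉ 𝒜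
        then p ^ A.card * (1 - p) ^ (Fintype.card ι - A.card) else 0))
      = ∑ e : ι, ∑ A ∈ (Finset.univ : Finset ι).powerset,
          PivotalAux.w p Finset.univ A * PivotalAux.piv 𝒜 e A := by
    refine Finset.sum_congr rfl fun e _ => Finset.sum_congr rfl fun A _ => ?_
    rw [PivotalAux.w, PivotalAux.piv, Finset.card_univ]
    by_cases h : insert e A ∈ 𝒜 ∧ A.erase e ∉ 𝒜 <;> simp [h]
  rw [hrw]
  set S : ℝ := ∑ e : ι, ∑ A ∈ (Finset.univ : Finset ι).powerset,
    PivotalAux.w p Finset.univ A * PivotalAux.piv 𝒜 e A with hSdef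
  have hS_nonneg : 0 ≤ S := by
    refine Finset.sum_nonneg fun e _ => Finset.sum_nonneg fun A _ => mul_nonneg ?_ ?_
    · exact mul_nonneg (pow_nonneg hp0.le _) (pow_nonneg (by linarith) _)
    · rw [PivotalAux.piv]; split_ifs <;> norm_num
  have hsq := PivotalAux.sq_bound p hp0 hp1 𝒜 hup
  have hqq : x * (1 - x) ≤ p * (1 - p) := by nlinarith
  have hsq' : S ^ 2 ≤ (Fintype.card ι : ℝ) / (4 * (x * (1 - x))) := by
    refine hsq.trans ?_
    gcongr
  have hSle : S ≤ Real.sqrt ((Fintype.card ι : ℝ) / (4 * (x * (1 - x)))) := by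
    have h := Real.sqrt_le_sqrt hsq'
    rwa [Real.sqrt_sq hS_nonneg] at h
  have h4 : Real.sqrt (4 * (x * (1 - x))) = 2 * Real.sqrt (x * (1 - x)) := by
    rw [show (4 : ℝ) * (x * (1 - x)) = 2 ^ 2 * (x * (1 - x)) by ring,
      Real.sqrt_mul (by positivity), Real.sqrt_sq (by norm_num : (0:ℝ) ≤ 2)]
  have hsplit : Real.sqrt ((Fintype.card ι : ℝ) / (4 * (x * (1 - x))))
      = Real.sqrt (Fintype.card ι) / (2 * Real.sqrt (x * (1 - x))) := by
    rw [Real.sqrt_div (Nat.cast_nonneg _), h4]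
  rw [hsplit] at hSle
  have hrn : Real.sqrt (Fintype.card ι) * Real.sqrt (Fintype.card ι)
      = (Fintype.card ι : ℝ) := Real.mul_self_sqrt (Nat.cast_nonneg _)
  have hrnpos : 0 < Real.sqrt (Fintype.card ι) := Real.sqrt_pos.mpr hn0
  calc (1 / (Fintype.card ι : ℝ)) * S
      ≤ (1 / (Fintype.card ι : ℝ)) *
          (Real.sqrt (Fintype.card ι) / (2 * Real.sqrt (x * (1 - x)))) :=
        mul_le_mul_of_nonneg_left hSle (by positivity)
    _ = (1 / (2 * Real.sqrt (x * (1 - x)))) / Real.sqrt (Fintype.card ι) := by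
        have h1 : (1 / (Fintype.card ι : ℝ)) *
            (Real.sqrt (Fintype.card ι) / (2 * Real.sqrt (x * (1 - x))))
            = Real.sqrt (Fintype.card ι) /
              ((Fintype.card ι : ℝ) * (2 * Real.sqrt (x * (1 - x)))) := by ring
        have h2 : (1 / (2 * Real.sqrt (x * (1 - x)))) / Real.sqrt (Fintype.card ι)
            = 1 / ((2 * Real.sqrt (x * (1 - x))) * Real.sqrt (Fintype.card ι)) := by ring
        rw [h1, h2, div_eq_div_iff (by positivity) (by positivity)]
        linear_combination (2 * Real.sqrt (x * (1 - x))) * hrn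

end
end

section
/- Let x > 0, b > 0, c > 0 and Δ ∈ ℕ. Then there exists β > 0 such that the following holds for every finite graph G = (V,E) of maximum degree at most Δ which is a vertex b-expander, and every p ∈ [x, 1−x]: (1/|E|) · ∑_{e∈E} P_p({F ⊆ E : e is an L-bridge for F}) ≤ β/√|V|. -/
open Filter Topology
open scoped Classical

noncomputable section

variable {V : Type*}

/-!
Let `g F = ∑ v, compCard F v`, the sum of the squared component sizes of `F`; it is monotone
and at most `n²`. Adding an L-bridge `e` to `F \ {e}` merges two components of size at least
`c n`, so it raises `g` by at least `2 c² n²`, and hence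
`P_p(e is an L-bridge) ≤ E_p[g (F ∪ {e}) - g (F \ {e})] / (2 c² n²)`.
Summed over `e` the right-hand side is the total influence of `g`, and `p (1 - p)` times it equals
`E_p[g F * (|F| - m p)]`; by Cauchy–Schwarz and the binomial variance this is at most
`n² √(m p (1 - p))`. The average over the `m` edges is therefore `O(1 / √m)`, and `n ≤ 2 m`
because an expander has no isolated vertices.
-/

section BernoulliWeight

open Finset

variable {α : Type*} {p : ℝ} {E : Finset α}

def bernoulliWeight (p : ℝ) (E F : Finset α) : ℝ :=
  p ^ F.card * (1 - p) ^ (E.card - F.card)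

lemma bernoulliWeight_nonneg (hp0 : 0 ≤ p) (hp1 : p ≤ 1) (F : Finset α) :
    0 ≤ bernoulliWeight p E F := by
  unfold bernoulliWeight
  have : 0 ≤ 1 - p := by linarith
  positivity

lemma sum_bernoulliWeight (p : ℝ) (E : Finset α) :
    ∑ F ∈ E.powerset, bernoulliWeight p E F = 1 := by
  simp only [bernoulliWeight, sum_pow_mul_eq_add_pow, add_sub_cancel, one_pow]

variable [DecidableEq α]

lemma sum_powerset_insert_bernoulliWeight_mul {a : α} (ha : a ∉ E) (f : Finset α → ℝ) :
    ∑ F ∈ (insert a E).powerset, bernoulliWeight p (insert a E) F * f F =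
      ∑ F ∈ E.powerset, bernoulliWeight p E F * ((1 - p) * f F + p * f (insert a F)) := by
  rw [sum_powerset_insert ha, ← sum_add_distrib]
  refine sum_congr rfl fun F hF => ?_
  have hFE := card_le_card (mem_powerset.mp hF)
  have haF : a ∉ F := fun h => ha (mem_powerset.mp hF h)
  simp only [bernoulliWeight, card_insert_of_notMem ha, card_insert_of_notMem haF,
    Nat.add_sub_add_right, Nat.sub_add_comm hFE, pow_succ]
  ring

lemma sum_bernoulliWeight_mul_sq_card_sub (p : ℝ) (E : Finset α) :
    ∑ F ∈ E.powerset, bernoulliWeight p E F * ((F.card : ℝ) - E.card * p) ^ 2 =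
      E.card * p * (1 - p) := by
  induction E using Finset.induction_on with
  | empty => simp [bernoulliWeight]
  | insert a E ha ih =>
    rw [sum_powerset_insert_bernoulliWeight_mul ha]
    have hsplit : ∀ F ∈ E.powerset,
        bernoulliWeight p E F * ((1 - p) * ((F.card : ℝ) - (insert a E).card * p) ^ 2 +
          p * (((insert a F).card : ℝ) - (insert a E).card * p) ^ 2) =
        bernoulliWeight p E F * ((F.card : ℝ) - E.card * p) ^ 2 +
          p * (1 - p) * bernoulliWeight p E F := by
      intro F hF
      have haF : a ∉ F := fun h => ha (mem_powerset.mp hF h)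
      rw [card_insert_of_notMem ha, card_insert_of_notMem haF]
      push_cast
      ring
    rw [sum_congr rfl hsplit, sum_add_distrib, ← mul_sum, ih,
      sum_bernoulliWeight, card_insert_of_notMem ha]
    push_cast
    ring

lemma sum_bernoulliWeight_mul_abs_card_sub_le (hp0 : 0 ≤ p) (hp1 : p ≤ 1) :
    ∑ F ∈ E.powerset, bernoulliWeight p E F * |(F.card : ℝ) - E.card * p| ≤
      √(E.card * p * (1 - p)) := by
  refine (le_abs_self _).trans (Real.abs_le_sqrt ?_)
  calc (∑ F ∈ E.powerset, bernoulliWeight p E F * |(F.card : ℝ) - E.card * p|) ^ 2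
      ≤ (∑ F ∈ E.powerset, bernoulliWeight p E F) *
          ∑ F ∈ E.powerset, bernoulliWeight p E F * ((F.card : ℝ) - E.card * p) ^ 2 :=
        sum_sq_le_sum_mul_sum_of_sq_le_mul _
          (fun F _ => bernoulliWeight_nonneg hp0 hp1 F)
          (fun F _ => mul_nonneg (bernoulliWeight_nonneg hp0 hp1 F) (sq_nonneg _))
          (fun F _ => le_of_eq (by rw [mul_pow, sq_abs]; ring))
    _ = E.card * p * (1 - p) := by
      rw [sum_bernoulliWeight, sum_bernoulliWeight_mul_sq_card_sub, one_mul]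

lemma sum_bernoulliWeight_mul_indicator_sub {a : α} (ha : a ∈ E) (f : Finset α → ℝ) :
    ∑ F ∈ E.powerset, bernoulliWeight p E F * (f F * ((if a ∈ F then 1 else 0) - p)) =
      p * (1 - p) *
        ∑ F ∈ E.powerset, bernoulliWeight p E F * (f (insert a F) - f (F.erase a)) := by
  obtain ⟨E, haE, rfl⟩ : ∃ E', a ∉ E' ∧ E = insert a E' :=
    ⟨E.erase a, notMem_erase a E, (insert_erase ha).symm⟩
  rw [sum_powerset_insert_bernoulliWeight_mul haE, sum_powerset_insert_bernoulliWeight_mul haE,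
    mul_sum]
  refine sum_congr rfl fun F hF => ?_
  have haF : a ∉ F := fun h => haE (mem_powerset.mp hF h)
  simp only [mem_insert_self, if_true, if_neg haF, insert_idem,
    erase_insert haF, erase_eq_of_notMem haF]
  ring

lemma mul_sum_influence_eq_sum_mul_card_sub (p : ℝ) (E : Finset α) (f : Finset α → ℝ) :
    p * (1 - p) * ∑ a ∈ E, ∑ F ∈ E.powerset,
        bernoulliWeight p E F * (f (insert a F) - f (F.erase a)) =
      ∑ F ∈ E.powerset, bernoulliWeight p E F * (f F * ((F.card : ℝ) - E.card * p)) := by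
  rw [mul_sum, sum_congr rfl fun a ha =>
    (sum_bernoulliWeight_mul_indicator_sub ha f).symm, sum_comm]
  refine sum_congr rfl fun F hF => ?_
  rw [← mul_sum, ← mul_sum, sum_sub_distrib, sum_boole,
    sum_const, nsmul_eq_mul, filter_mem_eq_inter,
    inter_eq_right.mpr (mem_powerset.mp hF)]

theorem sum_influence_le (hp0 : 0 < p) (hp1 : p < 1) {f : Finset α → ℝ} {K : ℝ}
    (hf0 : ∀ F, 0 ≤ f F) (hfK : ∀ F, f F ≤ K) :
    ∑ a ∈ E, ∑ F ∈ E.powerset, bernoulliWeight p E F * (f (insert a F) - f (F.erase a)) ≤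
      K * √E.card / √(p * (1 - p)) := by
  have hpq : 0 < p * (1 - p) := mul_pos hp0 (by linarith)
  have hw := bernoulliWeight_nonneg (E := E) hp0.le hp1.le
  have hs := Real.sqrt_pos.mpr hpq
  rw [le_div_iff₀ hs, mul_comm, ← mul_le_mul_iff_of_pos_left hs, ← mul_assoc,
    Real.mul_self_sqrt hpq.le, mul_sum_influence_eq_sum_mul_card_sub]
  calc ∑ F ∈ E.powerset, bernoulliWeight p E F * (f F * ((F.card : ℝ) - E.card * p))
      ≤ ∑ F ∈ E.powerset, bernoulliWeight p E F * (K * |(F.card : ℝ) - E.card * p|) := by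
        refine sum_le_sum fun F _ => mul_le_mul_of_nonneg_left ?_ (hw F)
        exact (le_abs_self _).trans (by rw [abs_mul, abs_of_nonneg (hf0 F)]; gcongr; exact hfK F)
    _ = K * ∑ F ∈ E.powerset, bernoulliWeight p E F * |(F.card : ℝ) - E.card * p| := by
        rw [mul_sum]; exact sum_congr rfl fun F _ => by ring
    _ ≤ K * √(E.card * p * (1 - p)) :=
        mul_le_mul_of_nonneg_left (sum_bernoulliWeight_mul_abs_card_sub_le hp0.le hp1.le)
          ((hf0 ∅).trans (hfK ∅))
    _ = √(p * (1 - p)) * (K * √E.card) := by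
        rw [mul_assoc, Real.sqrt_mul (Nat.cast_nonneg _)]; ring

end BernoulliWeight

section ComponentSizes

open Finset SimpleGraph

variable [Fintype V]

lemma compCard_eq_card_filter (F : Finset (Sym2 V)) (v : V) :
    compCard F v = #{w | (fromEdgeSet (F : Set (Sym2 V))).Reachable v w} := by
  rw [compCard, ← Set.ncard_coe_finset]
  simp

lemma compCard_le_card (F : Finset (Sym2 V)) (v : V) : compCard F v ≤ Fintype.card V := by
  rw [compCard_eq_card_filter]
  exact Finset.card_filter_le _ _

lemma compCard_mono {F F' : Finset (Sym2 V)} (h : F ⊆ F') (v : V) :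
    compCard F v ≤ compCard F' v :=
  Set.ncard_le_ncard (fun _ hw => hw.mono (fromEdgeSet_mono (Finset.coe_subset.mpr h)))
    (Set.toFinite _)

lemma compCard_add_compCard_le {F F' : Finset (Sym2 V)} (h : F ⊆ F') {v w : V}
    (hF' : (fromEdgeSet (F' : Set (Sym2 V))).Reachable v w)
    (hF : ¬ (fromEdgeSet (F : Set (Sym2 V))).Reachable v w) :
    compCard F v + compCard F w ≤ compCard F' v := by
  have hle : fromEdgeSet (F : Set (Sym2 V)) ≤ fromEdgeSet F' :=
    fromEdgeSet_mono (Finset.coe_subset.mpr h)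
  rw [compCard, compCard, compCard, ← Set.ncard_union_eq ?disj (Set.toFinite _) (Set.toFinite _)]
  · refine Set.ncard_le_ncard ?_ (Set.toFinite _)
    rintro t (ht | ht)
    · exact ht.mono hle
    · exact hF'.trans (ht.mono hle)
  · exact Set.disjoint_left.mpr fun t hvt hwt => hF (hvt.trans hwt.symm)

def sumCompCard (F : Finset (Sym2 V)) : ℕ := ∑ v, compCard F v

lemma sumCompCard_mono {F F' : Finset (Sym2 V)} (h : F ⊆ F') : sumCompCard F ≤ sumCompCard F' :=
  sum_le_sum fun v _ => compCard_mono h v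

lemma sumCompCard_le (F : Finset (Sym2 V)) : sumCompCard F ≤ Fintype.card V ^ 2 :=
  (sum_le_card_nsmul _ _ _ fun v _ => compCard_le_card F v).trans_eq (by simp [sq])

lemma sumCompCard_add_le_insert {F : Finset (Sym2 V)} {u v : V}
    (huv : ¬ (fromEdgeSet (F : Set (Sym2 V))).Reachable u v) :
    sumCompCard F + 2 * (compCard F u * compCard F v) ≤ sumCompCard (insert s(u, v) F) := by
  set R := (fromEdgeSet (F : Set (Sym2 V))).Reachable
  set F' := insert s(u, v) F
  have hF : F ⊆ F' := subset_insert _ _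
  have hmono : fromEdgeSet (F : Set (Sym2 V)) ≤ fromEdgeSet F' :=
    fromEdgeSet_mono (coe_subset.mpr hF)
  have hlink : (fromEdgeSet (F' : Set (Sym2 V))).Reachable u v :=
    Adj.reachable (by rw [fromEdgeSet_adj]; exact ⟨by simp [F'], fun h => huv (h ▸ .refl u)⟩)
  have hpoint : ∀ w, compCard F w + ((if R u w then compCard F v else 0) +
      (if R v w then compCard F u else 0)) ≤ compCard F' w := by
    intro w
    by_cases huw : R u w
    · have hvw : ¬ R v w := fun hvw => huv (huw.trans hvw.symm)
      simp only [huw, hvw, if_true, if_false, add_zero]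
      exact compCard_add_compCard_le hF ((huw.mono hmono).symm.trans hlink)
        fun hwv => huv (huw.trans hwv)
    by_cases hvw : R v w
    · simp only [huw, hvw, if_true, if_false, zero_add]
      exact compCard_add_compCard_le hF ((hvw.mono hmono).symm.trans hlink.symm)
        fun hwu => huv (hvw.trans hwu).symm
    simpa only [huw, hvw, if_false, add_zero] using compCard_mono hF w
  have hcount : ∀ a b,
      ∑ w, (if R a w then compCard F b else 0) = compCard F a * compCard F b := by
    intro a b
    rw [← sum_filter, sum_const, smul_eq_mul, compCard_eq_card_filter F a]
  calc sumCompCard F + 2 * (compCard F u * compCard F v)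
      = ∑ w, (compCard F w + ((if R u w then compCard F v else 0) +
          (if R v w then compCard F u else 0))) := by
        rw [sum_add_distrib, sum_add_distrib, hcount, hcount, sumCompCard]
        ring
    _ ≤ sumCompCard F' := sum_le_sum fun w _ => hpoint w

end ComponentSizes

section LBridge

open Finset SimpleGraph

variable [Fintype V] {G : SimpleGraph V} {c p : ℝ}

lemma IsLBridge.two_mul_sq_le_sumCompCard_sub (hc : 0 ≤ c) {F : Finset (Sym2 V)} {e : Sym2 V}
    (h : IsLBridge G c F e) :
    2 * (c * Fintype.card V) ^ 2 ≤
      (sumCompCard (insert e F) : ℝ) - sumCompCard (F.erase e) := by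
  obtain ⟨-, u, v, rfl, huv, hu, hv⟩ := h
  have hins : insert s(u, v) F = insert s(u, v) (F.erase s(u, v)) := by
    ext a; by_cases h : a = s(u, v) <;> simp [h]
  have hgap : (sumCompCard (F.erase s(u, v)) : ℝ) +
      2 * (compCard (F.erase s(u, v)) u * compCard (F.erase s(u, v)) v) ≤
        sumCompCard (insert s(u, v) F) := by
    rw [hins]; exact_mod_cast sumCompCard_add_le_insert huv
  nlinarith [mul_le_mul hu hv (by positivity) (hu.trans' (by positivity))]

variable [DecidableEq V] [DecidableRel G.Adj]

lemma mul_percProb_isLBridge_le (hc : 0 ≤ c) (hp0 : 0 ≤ p) (hp1 : p ≤ 1) (e : Sym2 V) :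
    2 * (c * Fintype.card V) ^ 2 * percProb G p {F | IsLBridge G c F e} ≤
      ∑ F ∈ G.edgeFinset.powerset, bernoulliWeight p G.edgeFinset F *
        ((sumCompCard (insert e F) : ℝ) - sumCompCard (F.erase e)) := by
  rw [percProb, mul_sum]
  refine sum_le_sum fun F _ => ?_
  have hw := bernoulliWeight_nonneg (E := G.edgeFinset) hp0 hp1 F
  split_ifs with h
  · -- `IsLBridge` and the `sumCompCard` lemmas use classical decidable equality on edges
    have hgap : 2 * (c * Fintype.card V) ^ 2 ≤
        (sumCompCard (insert e F) : ℝ) - sumCompCard (F.erase e) := by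
      convert h.two_mul_sq_le_sumCompCard_sub hc
    rw [mul_comm, ← bernoulliWeight]
    exact mul_le_mul_of_nonneg_left hgap hw
  · rw [mul_zero]
    refine mul_nonneg hw (sub_nonneg.mpr ?_)
    exact_mod_cast sumCompCard_mono ((erase_subset e F).trans (subset_insert e F))

theorem sum_percProb_isLBridge_le [Nonempty V] (hc : 0 < c) (hp0 : 0 < p) (hp1 : p < 1) :
    ∑ e ∈ G.edgeFinset, percProb G p {F | IsLBridge G c F e} ≤
      √(#G.edgeFinset) / √(p * (1 - p)) / (2 * c ^ 2) := by
  have hn : (0 : ℝ) < Fintype.card V ^ 2 := by positivity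
  rw [le_div_iff₀ (by positivity), ← mul_le_mul_iff_of_pos_left hn, mul_div_assoc']
  calc (Fintype.card V : ℝ) ^ 2 *
        ((∑ e ∈ G.edgeFinset, percProb G p {F | IsLBridge G c F e}) * (2 * c ^ 2))
      = ∑ e ∈ G.edgeFinset,
          2 * (c * Fintype.card V) ^ 2 * percProb G p {F | IsLBridge G c F e} := by
        rw [sum_mul, mul_sum]; exact sum_congr rfl fun _ _ => by ring
    _ ≤ ∑ e ∈ G.edgeFinset, ∑ F ∈ G.edgeFinset.powerset,
          bernoulliWeight p G.edgeFinset F *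
            ((sumCompCard (insert e F) : ℝ) - sumCompCard (F.erase e)) :=
        sum_le_sum fun e _ => mul_percProb_isLBridge_le hc.le hp0.le hp1.le e
    _ ≤ (Fintype.card V : ℝ) ^ 2 * √(#G.edgeFinset) / √(p * (1 - p)) :=
        sum_influence_le (f := fun F => (sumCompCard F : ℝ)) hp0 hp1
          (fun _ => Nat.cast_nonneg _) (fun F => by exact_mod_cast sumCompCard_le F)

end LBridge

section Expander

open Finset SimpleGraph

variable [Fintype V] {G : SimpleGraph V} [DecidableRel G.Adj] {b : ℝ}

lemma VertexExpander.degree_pos [Nontrivial V] (hG : VertexExpander G b) (hb : 0 < b) (v : V) :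
    0 < G.degree v := by
  have hV : (2 : ℝ) ≤ Fintype.card V := by exact_mod_cast Fintype.one_lt_card
  have h := hG {v} (by simp) (by simp only [card_singleton, Nat.cast_one]; linarith)
  rw [card_singleton, Nat.cast_one, mul_one] at h
  obtain ⟨w, -, u, hu, huw⟩ :=
    (Set.ncard_pos (Set.toFinite _)).mp (Nat.cast_pos.mp (hb.trans_le h))
  rw [mem_singleton] at hu
  exact (G.degree_pos_iff_exists_adj v).mpr ⟨w, hu ▸ huw⟩

lemma VertexExpander.card_le_two_mul_card_edgeFinset [Nontrivial V] (hG : VertexExpander G b)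
    (hb : 0 < b) : Fintype.card V ≤ 2 * #G.edgeFinset := by
  rw [← G.sum_degrees_eq_twice_card_edges, Fintype.card_eq_sum_ones]
  exact sum_le_sum fun v _ => hG.degree_pos hb v

end Expander

theorem L_bridge_probability_bound
    (x b c : ℝ) (hx : 0 < x) (hb : 0 < b) (hc : 0 < c) (Δ : ℕ) :
    ∃ β > (0 : ℝ), ∀ (V : Type) [Fintype V] [DecidableEq V]
      (G : SimpleGraph V) [DecidableRel G.Adj],
      (∀ v, G.degree v ≤ Δ) → VertexExpander G b →
      ∀ p ∈ Set.Icc x (1 - x),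
      (1 / (G.edgeFinset.card : ℝ)) *
          ∑ e ∈ G.edgeFinset, percProb G p {F | IsLBridge G c F e}
        ≤ β / Real.sqrt (Fintype.card V) := by
  refine ⟨1 / (c ^ 2 * x), by positivity, fun V _ _ G _ _ hG p ⟨hxp, hpx⟩ => ?_⟩
  set m := G.edgeFinset.card
  rcases m.eq_zero_or_pos with hm | hm
  · rw [hm, Nat.cast_zero, div_zero, zero_mul]
    positivity
  obtain ⟨⟨u, v⟩, huv⟩ := Finset.card_pos.mp hm
  have : Nontrivial V := (SimpleGraph.mem_edgeFinset.mp huv).nontrivial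
  have hS := sum_percProb_isLBridge_le (G := G) hc (hx.trans_le hxp) (by linarith)
  have hpq : x ≤ √(p * (1 - p)) := Real.le_sqrt_of_sq_le (by nlinarith)
  have hm' : (0 : ℝ) < m := by exact_mod_cast hm
  have hnm : √(Fintype.card V) ≤ 2 * √m := by
    have hn : (Fintype.card V : ℝ) ≤ 2 * m := by
      exact_mod_cast hG.card_le_two_mul_card_edgeFinset hb
    rw [Real.sqrt_le_iff, mul_pow, Real.sq_sqrt hm'.le]
    exact ⟨by positivity, by linarith⟩
  calc 1 / (m : ℝ) * ∑ e ∈ G.edgeFinset, percProb G p {F | IsLBridge G c F e}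
      ≤ 1 / m * (√m / x / (2 * c ^ 2)) := by gcongr; exact hS.trans (by gcongr)
    _ = 1 / (c ^ 2 * x) / (2 * √m) := by
        field_simp
        exact Real.sq_sqrt hm'.le
    _ ≤ 1 / (c ^ 2 * x) / √(Fintype.card V) := by gcongr

end
end

section
/- Let d ≥ 2 and let (G_n), G_n = (V_n, E_n), be any sequence of finite d-regular graphs with |V_n| → ∞. If p < 1/(d−1), then for every c > 0 the probability that the random subgraph G_n(p) contains a connected component with at least c·|V_n| vertices tends to 0 as n → ∞. -/
open Filter Topology
open scoped Classical

noncomputable section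

variable {V : Type*}

/-!
A path of length `n + 1` from a vertex of a graph of maximum degree `d` is a first step followed
by a path of length `n` that does not step back, so there are at most `d (d - 1) ^ n` of them.
By the union bound over paths, the expected size of the cluster of a vertex is at most
`∑ₙ 2 ((d - 1) p) ^ n`, which is bounded independently of the graph when `p < 1 / (d - 1)`.
Hence the expected number of ordered pairs of connected vertices is `O(|V|)`, whereas a cluster
with at least `c |V|` vertices produces `c² |V|²` such pairs; by Markov's inequality its
probability is `O(1 / (c² |V|))`.
-/

open Finset

section Percolation

variable [Fintype V] [DecidableEq V] (G : SimpleGraph V) [DecidableRel G.Adj] {p : ℝ}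

lemma percProb_nonneg (hp0 : 0 ≤ p) (hp1 : p ≤ 1) (A : Set (Finset (Sym2 V))) :
    0 ≤ percProb G p A :=
  sum_nonneg fun _ _ => by
    split_ifs
    exacts [mul_nonneg (pow_nonneg hp0 _) (pow_nonneg (sub_nonneg.2 hp1) _), le_rfl]

lemma percProb_setOf_superset {S : Finset (Sym2 V)} (hS : S ⊆ G.edgeFinset) :
    percProb G p {F | S ⊆ F} = p ^ #S := by
  have hinj : Set.InjOn (S ∪ ·) (G.edgeFinset \ S).powerset := fun T hT U hU hTU => by
    have hdisj : ∀ {T}, T ∈ ((G.edgeFinset \ S).powerset : Set _) → Disjoint S T :=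
      fun hT => disjoint_of_subset_right (mem_powerset.1 hT) disjoint_sdiff
    simpa only [union_sdiff_cancel_left (hdisj hT), union_sdiff_cancel_left (hdisj hU)]
      using congrArg (· \ S) hTU
  calc percProb G p {F | S ⊆ F}
      = ∑ F ∈ Icc S G.edgeFinset, p ^ #F * (1 - p) ^ (#G.edgeFinset - #F) := by
        rw [percProb, Icc_eq_filter_powerset, sum_filter]
        exact sum_congr rfl fun F _ => by congr
    _ = ∑ T ∈ (G.edgeFinset \ S).powerset,
          p ^ #S * (p ^ #T * (1 - p) ^ (#(G.edgeFinset \ S) - #T)) := by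
        rw [Icc_eq_image_powerset hS, sum_image hinj]
        refine sum_congr rfl fun T hT => ?_
        have hdisj : Disjoint S T := disjoint_of_subset_right (mem_powerset.1 hT) disjoint_sdiff
        have hT' : #T ≤ #G.edgeFinset - #S := by
          simpa [card_sdiff_of_subset hS] using card_le_card (mem_powerset.1 hT)
        rw [card_union_of_disjoint hdisj, card_sdiff_of_subset hS, pow_add,
          show #G.edgeFinset - (#S + #T) = #G.edgeFinset - #S - #T by omega]
        ring
    _ = p ^ #S := by rw [← mul_sum, sum_pow_mul_eq_add_pow]; simp

/-- Markov's inequality for the counting variable `F ↦ #{i ∈ s | F ∈ B i}`. -/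
lemma mul_percProb_le_sum {ι : Type*} (hp0 : 0 ≤ p) (hp1 : p ≤ 1) (s : Finset ι)
    (A : Set (Finset (Sym2 V))) (B : ι → Set (Finset (Sym2 V))) (m : ℝ)
    (h : ∀ F ⊆ G.edgeFinset, F ∈ A → m ≤ #{i ∈ s | F ∈ B i}) :
    m * percProb G p A ≤ ∑ i ∈ s, percProb G p (B i) := by
  simp only [percProb, mul_sum]
  rw [sum_comm]
  refine sum_le_sum fun F hF => ?_
  set w := p ^ #F * (1 - p) ^ (#G.edgeFinset - #F)
  have hw : 0 ≤ w := mul_nonneg (pow_nonneg hp0 _) (pow_nonneg (sub_nonneg.2 hp1) _)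
  have hcount : ∑ i ∈ s, (if F ∈ B i then w else 0) = #{i ∈ s | F ∈ B i} * w := by
    rw [← sum_filter, sum_const, nsmul_eq_mul]
  rw [hcount]
  split_ifs with hFA
  · exact mul_le_mul_of_nonneg_right (h F (mem_powerset.1 hF) hFA) hw
  · rw [mul_zero]; positivity

end Percolation

section Paths

def tailSigma {G : SimpleGraph V} {x : V} (π : Σ w, G.Walk x w) : Σ y, Σ w, G.Walk y w :=
  ⟨π.2.snd, π.1, π.2.tail⟩

lemma tailSigma_injOn {G : SimpleGraph V} (x : V) :
    Set.InjOn (tailSigma (G := G) (x := x)) {π | ¬ π.2.Nil} := by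
  intro π hπ π' hπ' h
  have hcons : ∀ (π : Σ w, G.Walk x w) (hπ : ¬ π.2.Nil),
      (⟨π.1, .cons (π.2.adj_snd hπ) π.2.tail⟩ : Σ w, G.Walk x w) = π :=
    fun ⟨w, q⟩ hq => congrArg (Sigma.mk w) (q.cons_tail_eq hq)
  have hcongr : ∀ (z z' : Σ y, Σ w, G.Walk y w) (hz : G.Adj x z.1) (hz' : G.Adj x z'.1),
      z = z' → (⟨z.2.1, .cons hz z.2.2⟩ : Σ w, G.Walk x w) = ⟨z'.2.1, .cons hz' z'.2.2⟩ := by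
    rintro z _ _ _ rfl
    rfl
  rw [← hcons π hπ, ← hcons π' hπ']
  exact hcongr (tailSigma π) (tailSigma π') _ _ h

variable [Fintype V] (G : SimpleGraph V) [DecidableRel G.Adj] {d : ℕ}

def pathsFrom (x : V) (n : ℕ) : Finset (Σ w, G.Walk x w) :=
  univ.sigma fun w => {q ∈ G.finsetWalkLength n x w | q.IsPath}

variable {G}

lemma mem_pathsFrom {x : V} {n : ℕ} {π : Σ w, G.Walk x w} :
    π ∈ pathsFrom G x n ↔ π.2.length = n ∧ π.2.IsPath := by
  simp [pathsFrom, SimpleGraph.mem_finsetWalkLength_iff]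

lemma card_pathsFrom_zero_le (x : V) : #(pathsFrom G x 0) ≤ 1 := by
  have hnil : ∀ π ∈ pathsFrom G x 0, π = ⟨x, .nil⟩ := by
    rintro ⟨w, q⟩ hq
    cases q with
    | nil => rfl
    | cons _ _ => simp [mem_pathsFrom] at hq
  exact card_le_one.2 fun π hπ π' hπ' => (hnil π hπ).trans (hnil π' hπ').symm

lemma card_le_sum_card_pathsFrom_snd_ne {x : V} {n : ℕ} (Y : Finset V)
    {S : Finset (Σ w, G.Walk x w)} (hS : S ⊆ pathsFrom G x (n + 1))
    (hY : ∀ π ∈ S, π.2.snd ∈ Y) :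
    #S ≤ ∑ y ∈ Y, #{τ ∈ pathsFrom G y n | τ.2.snd ≠ x} := by
  rw [← card_sigma]
  refine card_le_card_of_injOn tailSigma (fun π hπ => ?_)
    ((tailSigma_injOn x).mono fun π hπ => ?_)
  · obtain ⟨hlen, hpath⟩ := mem_pathsFrom.1 (hS hπ)
    have hnil : ¬ π.2.Nil := by simp [← SimpleGraph.Walk.length_eq_zero_iff, hlen]
    have hx : x ∉ π.2.tail.support := by
      have := hpath.support_nodup
      rw [← SimpleGraph.Walk.cons_support_tail hnil, List.nodup_cons] at this
      exact this.1
    refine mem_sigma.2 ⟨hY π hπ, mem_filter.2 ⟨mem_pathsFrom.2 ⟨?_, hpath.tail⟩, ?_⟩⟩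
    · have := SimpleGraph.Walk.length_tail_add_one hnil
      show π.2.tail.length = n
      omega
    · show π.2.tail.snd ≠ x
      intro h
      have hsnd := π.2.tail.getVert_mem_support 1
      rw [show π.2.tail.getVert 1 = x from h] at hsnd
      exact hx hsnd
  · have := (mem_pathsFrom.1 (hS hπ)).1
    simp [← SimpleGraph.Walk.length_eq_zero_iff, this]

lemma card_pathsFrom_snd_ne_le (hdeg : ∀ v, G.degree v ≤ d) (n : ℕ) :
    ∀ x u, G.Adj x u → #{π ∈ pathsFrom G x n | π.2.snd ≠ u} ≤ (d - 1) ^ n := by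
  induction n with
  | zero => exact fun x _ _ => (card_filter_le _ _).trans (card_pathsFrom_zero_le x)
  | succ n ih =>
    intro x u hxu
    calc #{π ∈ pathsFrom G x (n + 1) | π.2.snd ≠ u}
        ≤ ∑ y ∈ (G.neighborFinset x).erase u, #{τ ∈ pathsFrom G y n | τ.2.snd ≠ x} := by
          refine card_le_sum_card_pathsFrom_snd_ne _ (filter_subset _ _) fun π hπ => ?_
          obtain ⟨hπ, hu⟩ := mem_filter.1 hπ
          have hnil : ¬ π.2.Nil := by
            simp [← SimpleGraph.Walk.length_eq_zero_iff, (mem_pathsFrom.1 hπ).1]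
          simpa [hu] using π.2.adj_snd hnil
      _ ≤ ∑ y ∈ (G.neighborFinset x).erase u, (d - 1) ^ n :=
          sum_le_sum fun y hy => ih y x ((G.mem_neighborFinset x y).1 (mem_of_mem_erase hy)).symm
      _ ≤ (d - 1) ^ (n + 1) := by
          rw [sum_const, smul_eq_mul, card_erase_of_mem (by simpa using hxu),
            SimpleGraph.card_neighborFinset_eq_degree, pow_succ']
          gcongr
          exact hdeg x

lemma card_pathsFrom_succ_le (hdeg : ∀ v, G.degree v ≤ d) (x : V) (n : ℕ) :
    #(pathsFrom G x (n + 1)) ≤ d * (d - 1) ^ n :=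
  calc #(pathsFrom G x (n + 1))
      ≤ ∑ y ∈ G.neighborFinset x, #{τ ∈ pathsFrom G y n | τ.2.snd ≠ x} := by
        refine card_le_sum_card_pathsFrom_snd_ne _ subset_rfl fun π hπ => ?_
        have hnil : ¬ π.2.Nil := by
          simp [← SimpleGraph.Walk.length_eq_zero_iff, (mem_pathsFrom.1 hπ).1]
        simpa using π.2.adj_snd hnil
    _ ≤ ∑ y ∈ G.neighborFinset x, (d - 1) ^ n :=
        sum_le_sum fun y hy =>
          card_pathsFrom_snd_ne_le hdeg n y x ((G.mem_neighborFinset x y).1 hy).symm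
    _ ≤ d * (d - 1) ^ n := by
        rw [sum_const, smul_eq_mul, SimpleGraph.card_neighborFinset_eq_degree]
        gcongr
        exact hdeg x

lemma card_pathsFrom_le (hdeg : ∀ v, G.degree v ≤ d) (hd : 2 ≤ d) (x : V) (n : ℕ) :
    #(pathsFrom G x n) ≤ 2 * (d - 1) ^ n := by
  cases n with
  | zero => simpa using (card_pathsFrom_zero_le x).trans one_le_two
  | succ n =>
    calc #(pathsFrom G x (n + 1)) ≤ d * (d - 1) ^ n := card_pathsFrom_succ_le hdeg x n
      _ ≤ 2 * (d - 1) ^ (n + 1) := by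
        rw [pow_succ', ← mul_assoc]
        gcongr
        omega

end Paths

section Clusters

variable [Fintype V] [DecidableEq V] {G : SimpleGraph V} [DecidableRel G.Adj] {d : ℕ} {p : ℝ}

lemma compCard_eq_card (F : Finset (Sym2 V)) (v : V) :
    compCard F v = #{w | (SimpleGraph.fromEdgeSet (F : Set (Sym2 V))).Reachable v w} := by
  rw [compCard, ← Set.ncard_coe_finset]
  congr
  ext
  simp

lemma exists_mem_pathsFrom_of_reachable {F : Finset (Sym2 V)} (hF : F ⊆ G.edgeFinset)
    {v w : V} (h : (SimpleGraph.fromEdgeSet (F : Set (Sym2 V))).Reachable v w) :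
    ∃ n < Fintype.card V, ∃ π ∈ pathsFrom G v n, π.1 = w ∧ π.2.edges.toFinset ⊆ F := by
  obtain ⟨q⟩ := h
  have hqF : ∀ e ∈ q.bypass.edges, e ∈ F := fun e he =>
    (by simpa using q.bypass.edges_subset_edgeSet he : e ∈ F ∧ ¬ e.IsDiag).1
  have hqG : ∀ e ∈ q.bypass.edges, e ∈ G.edgeSet := fun e he =>
    SimpleGraph.mem_edgeFinset.1 (hF (hqF e he))
  refine ⟨_, q.bypass_isPath.length_lt, ⟨w, q.bypass.transfer G hqG⟩,
    mem_pathsFrom.2 ⟨by simp, q.bypass_isPath.transfer hqG⟩, rfl, fun e he => ?_⟩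
  rw [List.mem_toFinset, SimpleGraph.Walk.edges_transfer] at he
  exact hqF e he

lemma percProb_reachable_le (hp0 : 0 ≤ p) (hp1 : p ≤ 1) (v w : V) :
    percProb G p {F | (SimpleGraph.fromEdgeSet (F : Set (Sym2 V))).Reachable v w}
      ≤ ∑ n ∈ range (Fintype.card V), (#{π ∈ pathsFrom G v n | π.1 = w} : ℝ) * p ^ n := by
  have h := mul_percProb_le_sum G hp0 hp1
    ((range (Fintype.card V)).sigma fun n => {π ∈ pathsFrom G v n | π.1 = w})
    {F | (SimpleGraph.fromEdgeSet (F : Set (Sym2 V))).Reachable v w}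
    (fun π => {F | π.2.2.edges.toFinset ⊆ F}) 1 fun F hF hreach => by
      obtain ⟨n, hn, π, hπ, rfl, hπF⟩ := exists_mem_pathsFrom_of_reachable hF hreach
      exact_mod_cast card_pos.2 ⟨(⟨n, π⟩ : Σ _ : ℕ, Σ w, G.Walk v w), by simp_all⟩
  rw [one_mul, sum_sigma] at h
  refine h.trans (sum_le_sum fun n _ => le_of_eq ?_)
  rw [← nsmul_eq_mul, ← sum_const]
  refine sum_congr rfl fun π hπ => ?_
  obtain ⟨hlen, hpath⟩ := mem_pathsFrom.1 (mem_filter.1 hπ).1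
  rw [percProb_setOf_superset G fun e he => by
      simpa using π.2.edges_subset_edgeSet (List.mem_toFinset.1 he),
    List.toFinset_card_of_nodup hpath.edges_nodup, SimpleGraph.Walk.length_edges, hlen]

lemma sum_percProb_reachable_le (hdeg : ∀ v, G.degree v ≤ d) (hd : 2 ≤ d) (hp0 : 0 ≤ p)
    (hq : ((d : ℝ) - 1) * p < 1) (v : V) :
    ∑ w, percProb G p {F | (SimpleGraph.fromEdgeSet (F : Set (Sym2 V))).Reachable v w}
      ≤ 2 / (1 - ((d : ℝ) - 1) * p) := by
  have hd1 : (1 : ℝ) ≤ d - 1 := by rw [le_sub_iff_add_le, one_add_one_eq_two]; exact_mod_cast hd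
  have hp1 : p ≤ 1 := (le_mul_of_one_le_left hp0 hd1).trans hq.le
  calc ∑ w, percProb G p {F | (SimpleGraph.fromEdgeSet (F : Set (Sym2 V))).Reachable v w}
      ≤ ∑ w, ∑ n ∈ range (Fintype.card V), (#{π ∈ pathsFrom G v n | π.1 = w} : ℝ) * p ^ n :=
        sum_le_sum fun w _ => percProb_reachable_le hp0 hp1 v w
    _ = ∑ n ∈ range (Fintype.card V), (#(pathsFrom G v n) : ℝ) * p ^ n := by
        rw [sum_comm]
        refine sum_congr rfl fun n _ => ?_
        rw [← sum_mul, card_eq_sum_card_fiberwise fun π _ => mem_univ π.1]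
        push_cast
        rfl
    _ ≤ ∑ n ∈ range (Fintype.card V), 2 * (((d : ℝ) - 1) * p) ^ n := by
        refine sum_le_sum fun n _ => ?_
        have hcard := (Nat.cast_le (α := ℝ)).2 (card_pathsFrom_le hdeg hd v n)
        rw [Nat.cast_mul, Nat.cast_pow, Nat.cast_sub (by omega), Nat.cast_ofNat,
          Nat.cast_one] at hcard
        rw [mul_pow, ← mul_assoc]
        exact mul_le_mul_of_nonneg_right hcard (pow_nonneg hp0 n)
    _ ≤ 2 / (1 - ((d : ℝ) - 1) * p) := by
        rw [← mul_sum, ← mul_one_div]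
        gcongr
        simpa using geom_sum_Ico_le_of_lt_one (m := 0) (n := Fintype.card V)
          (mul_nonneg (by linarith) hp0) hq

lemma sq_mul_percProb_exists_compCard_ge_le (hdeg : ∀ v, G.degree v ≤ d) (hd : 2 ≤ d)
    (hp0 : 0 ≤ p) (hq : ((d : ℝ) - 1) * p < 1) {s : ℝ} (hs : 0 ≤ s) :
    s ^ 2 * percProb G p {F | ∃ v, s ≤ (compCard F v : ℝ)}
      ≤ Fintype.card V * (2 / (1 - ((d : ℝ) - 1) * p)) := by
  have hd1 : (1 : ℝ) ≤ d - 1 := by rw [le_sub_iff_add_le, one_add_one_eq_two]; exact_mod_cast hd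
  have hp1 : p ≤ 1 := (le_mul_of_one_le_left hp0 hd1).trans hq.le
  calc s ^ 2 * percProb G p {F | ∃ v, s ≤ (compCard F v : ℝ)}
      ≤ ∑ vw : V × V, percProb G p
          {F | (SimpleGraph.fromEdgeSet (F : Set (Sym2 V))).Reachable vw.1 vw.2} :=
        mul_percProb_le_sum G hp0 hp1 univ _ _ _ fun F _ ⟨v, hv⟩ => by
          set C : Finset V := {w | (SimpleGraph.fromEdgeSet (F : Set (Sym2 V))).Reachable v w}
          rw [compCard_eq_card] at hv
          calc s ^ 2 ≤ (#C : ℝ) ^ 2 := pow_le_pow_left₀ hs hv 2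
            _ = #(C ×ˢ C) := by rw [card_product]; push_cast; ring
            _ ≤ _ := by
              refine Nat.cast_le.2 (card_le_card fun ⟨a, b⟩ hab => ?_)
              simp only [C, mem_product, mem_filter, mem_univ, true_and] at hab ⊢
              exact hab.1.symm.trans hab.2
    _ = ∑ v, ∑ w, percProb G p
          {F | (SimpleGraph.fromEdgeSet (F : Set (Sym2 V))).Reachable v w} :=
        Fintype.sum_prod_type _
    _ ≤ ∑ _v : V, 2 / (1 - ((d : ℝ) - 1) * p) :=
        sum_le_sum fun v _ => sum_percProb_reachable_le hdeg hd hp0 hq v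
    _ = Fintype.card V * (2 / (1 - ((d : ℝ) - 1) * p)) := by simp

lemma percProb_exists_large_component_le (hdeg : ∀ v, G.degree v ≤ d) (hd : 2 ≤ d)
    (hp0 : 0 ≤ p) (hq : ((d : ℝ) - 1) * p < 1) {c : ℝ} (hc : 0 < c)
    (hV : 0 < Fintype.card V) :
    percProb G p {F | ∃ v, c * Fintype.card V ≤ (compCard F v : ℝ)}
      ≤ 2 / (1 - ((d : ℝ) - 1) * p) / (c ^ 2 * Fintype.card V) := by
  have hN : (0 : ℝ) < Fintype.card V := by exact_mod_cast hV
  have h := sq_mul_percProb_exists_compCard_ge_le hdeg hd hp0 hq (s := c * Fintype.card V)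
    (by positivity)
  rw [le_div_iff₀ (by positivity)]
  refine le_of_mul_le_mul_left ?_ hN
  linarith

end Clusters

theorem subcritical_no_giant_component
    (d : ℕ) (hd : 2 ≤ d)
    (V : ℕ → Type) [∀ n, Fintype (V n)] [∀ n, DecidableEq (V n)]
    (G : ∀ n, SimpleGraph (V n)) [∀ n, DecidableRel (G n).Adj]
    (hreg : ∀ n, (G n).IsRegularOfDegree d)
    (hV : Tendsto (fun n => Fintype.card (V n)) atTop atTop)
    (p : ℝ) (hp0 : 0 ≤ p) (hp : p < 1 / ((d : ℝ) - 1)) :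
    ∀ c > (0 : ℝ), Tendsto (fun n => percProb (G n) p
        {F | ∃ v : V n, c * Fintype.card (V n) ≤ (compCard F v : ℝ)})
      atTop (𝓝 0) := by
  intro c hc
  have hd1 : (1 : ℝ) ≤ d - 1 := by rw [le_sub_iff_add_le, one_add_one_eq_two]; exact_mod_cast hd
  have hq : ((d : ℝ) - 1) * p < 1 := by rwa [lt_div_iff₀ (by linarith), mul_comm] at hp
  have hp1 : p ≤ 1 := (le_mul_of_one_le_left hp0 hd1).trans hq.le
  have hN : Tendsto (fun n => c ^ 2 * (Fintype.card (V n) : ℝ)) atTop atTop :=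
    (tendsto_natCast_atTop_atTop.comp hV).const_mul_atTop (by positivity)
  refine tendsto_of_tendsto_of_tendsto_of_le_of_le' tendsto_const_nhds
    ((tendsto_const_nhds (x := 2 / (1 - ((d : ℝ) - 1) * p))).div_atTop hN)
    (Eventually.of_forall fun n => percProb_nonneg (G n) hp0 hp1 _) ?_
  filter_upwards [hV.eventually_ge_atTop 1] with n hn
  exact percProb_exists_large_component_le (fun v => (hreg n v).le) hd hp0 hq hc hn

end
end

section
/- Let d ≥ 2 and let G be the grid graph on vertex set {1,…,d}^d, in which two vertices are adjacent if and only if they differ by exactly 1 in exactly one coordinate and agree in all others. Then for every A ⊆ {1,…,d}^d with 0 < |A| ≤ d^d/2, the number of edges of G with exactly one endpoint in A is at least |A|/(2d). -/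
/-!
Route each pair `(u, v)` with `u ∈ A`, `v ∉ A` along the canonical path that turns `u` into `v`
by changing the coordinates one at a time, in increasing order, each by unit steps. The path
leaves `A` by a boundary edge `s(x, update x i t)` whose endpoint `x` agrees with `v` below `i` and
with `u` above `i`, so the edge together with `d ^ d * d` further choices of coordinates determines
the pair. Hence `|A| * |Aᶜ| ≤ |∂A| * d ^ d * d`, and `|Aᶜ| ≥ d ^ d / 2` gives `|∂A| ≥ |A| / (2 d)`.
-/

open Filter Topology
open scoped Classical

noncomputable section

variable {V : Type*}

/-- The grid graph on `{1, ..., d}^d`: two vertices are adjacent iff they differ by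
exactly `1` in exactly one coordinate and agree in all others. -/
def gridGraph (d : ℕ) : SimpleGraph (Fin d → Fin d) where
  Adj u v := ∃ i, (((u i : ℕ) + 1 = (v i : ℕ)) ∨ ((v i : ℕ) + 1 = (u i : ℕ))) ∧
    ∀ j, j ≠ i → u j = v j
  symm := by
    constructor
    rintro u v ⟨i, h1, h2⟩
    exact ⟨i, h1.symm, fun j hj => (h2 j hj).symm⟩
  loopless := by
    constructor
    rintro u ⟨i, h1, -⟩
    rcases h1 with h | h <;> omega


open Finset Function SimpleGraph

theorem Nat.exists_boundary_step {P : ℕ → Prop} {m : ℕ} (h0 : P 0) (hm : ¬P m) :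
    ∃ k < m, P k ∧ ¬P (k + 1) := by
  induction m with
  | zero => exact absurd h0 hm
  | succ m ih =>
    by_cases hPm : P m
    · exact ⟨m, m.lt_add_one, hPm, hm⟩
    · obtain ⟨k, hk, hPk⟩ := ih hPm
      exact ⟨k, hk.trans m.lt_add_one, hPk⟩

theorem SimpleGraph.Preconnected.exists_adj_mem_not_mem {W : Type*} {G : SimpleGraph W}
    (hG : G.Preconnected) {S : Set W} {u v : W} (hu : u ∈ S) (hv : v ∉ S) :
    ∃ x y, G.Adj x y ∧ x ∈ S ∧ y ∉ S := by
  obtain ⟨p⟩ := hG u v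
  obtain ⟨e, -, hx, hy⟩ := p.exists_boundary_dart S hu hv
  exact ⟨e.fst, e.snd, e.adj, hx, hy⟩

theorem Function.eq_of_update_eq_update {ι α : Type*} [DecidableEq ι] {x : ι → α}
    {i i' : ι} {t t' : α} (ht : t ≠ x i) (h : update x i t = update x i' t') : i = i' ∧ t = t' := by
  have hi : i = i' := by
    by_contra hne
    exact ht (by simpa [hne] using congrFun h i)
  subst hi
  exact ⟨rfl, by simpa using congrFun h i⟩

theorem gridGraph_adj_update {d : ℕ} {x : Fin d → Fin d} {i : Fin d} {t : Fin d}
    (h : (pathGraph d).Adj (x i) t) : (gridGraph d).Adj x (update x i t) :=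
  ⟨i, by simpa [pathGraph_adj] using h, fun j hj => by simp [hj]⟩

namespace GridPath

variable {n d : ℕ}

def IsExitStep (A : Finset (Fin n → Fin d)) (x : Fin n → Fin d) (i : Fin n) (t : Fin d) : Prop :=
  x ∈ A ∧ update x i t ∉ A ∧ (pathGraph d).Adj (x i) t

def exitSteps (A : Finset (Fin n → Fin d)) : Finset ((Fin n → Fin d) × Fin n × Fin d) :=
  univ.filter fun s => IsExitStep A s.1 s.2.1 s.2.2

theorem exists_exitStep {A : Finset (Fin n → Fin d)} {u v : Fin n → Fin d} (hu : u ∈ A)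
    (hv : v ∉ A) :
    ∃ x i t, IsExitStep A x i t ∧ (∀ j < i, x j = v j) ∧ ∀ j, i < j → x j = u j := by
  let z : ℕ → Fin n → Fin d := fun k j => if (j : ℕ) < k then v j else u j
  have hz0 : z 0 = u := by funext j; simp [z]
  have hzn : z n = v := by funext j; simp [z, j.isLt]
  obtain ⟨k, hk, hzk, hzk1⟩ :=
    Nat.exists_boundary_step (P := fun k => z k ∈ A) (hz0 ▸ hu) (hzn ▸ hv)
  set i : Fin n := ⟨k, hk⟩
  have hzi : update (z k) i (u i) = z k := by
    funext j; by_cases hj : j = i <;> simp [hj, z, i]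
  have hzi' : update (z k) i (v i) = z (k + 1) := by
    funext j
    by_cases hj : j = i
    · simp [hj, z, i]
    · have : (j : ℕ) < k + 1 ↔ (j : ℕ) < k := by
        have : (j : ℕ) ≠ k := fun h => hj (Fin.ext h)
        omega
      simp [update_of_ne hj, z, this]
  obtain ⟨s, t, hst, hs, ht⟩ := (pathGraph_preconnected d).exists_adj_mem_not_mem
    (S := {t | update (z k) i t ∈ A}) (u := u i) (v := v i) (by simpa [hzi]) (by simpa [hzi'])
  refine ⟨update (z k) i s, i, t, ⟨hs, by simpa using ht, by simpa using hst⟩, ?_, ?_⟩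
  · intro j hj
    simp [hj.ne, z, show (j : ℕ) < k from hj]
  · intro j hj
    simp [hj.ne', z, show ¬ (j : ℕ) < k from not_lt.2 hj.le]

/-- The endpoints of a canonical path leaving `A` from `x` in direction `i`, recovered from `x`
and the coordinates it does not record: `w` (those of `u` below `i` and of `v` from `i` on) and
`c = u i`. -/
def endpoints (x w : Fin n → Fin d) (i : Fin n) (c : Fin d) :
    (Fin n → Fin d) × (Fin n → Fin d) :=
  (fun j => if j < i then w j else if j = i then c else x j, fun j => if j < i then x j else w j)

theorem endpoints_eq {x u v : Fin n → Fin d} {i : Fin n} (hv : ∀ j < i, x j = v j)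
    (hu : ∀ j, i < j → x j = u j) :
    endpoints x (fun j => if j < i then u j else v j) i (u i) = (u, v) := by
  refine Prod.ext (funext fun j => ?_) (funext fun j => ?_)
  · rcases lt_trichotomy j i with h | rfl | h
    · simp [endpoints, h]
    · simp [endpoints]
    · simp [endpoints, h.ne', not_lt.2 h.le, hu j h]
  · by_cases h : j < i <;> simp [endpoints, h, hv]

theorem card_mul_card_compl_le (A : Finset (Fin n → Fin d)) :
    #A * #Aᶜ ≤ #(exitSteps A) * (d ^ n * d) := by
  calc #A * #Aᶜ = #(A ×ˢ Aᶜ) := (card_product A Aᶜ).symm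
    _ ≤ #(exitSteps A ×ˢ ((univ : Finset (Fin n → Fin d)) ×ˢ (univ : Finset (Fin d)))) := by
      refine card_le_card_of_surjOn (fun q => endpoints q.1.1 q.2.1 q.1.2.1 q.2.2) ?_
      rintro ⟨u, v⟩ huv
      simp only [coe_product, Set.mem_prod, mem_coe, mem_compl] at huv
      obtain ⟨x, i, t, hexit, hv, hu⟩ := exists_exitStep huv.1 huv.2
      exact ⟨((x, i, t), fun j => if j < i then u j else v j, u i), by simp [exitSteps, hexit],
        endpoints_eq hv hu⟩
    _ = #(exitSteps A) * (d ^ n * d) := by simp [card_product]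

theorem card_exitSteps_le_ncard_edgeBoundary (A : Finset (Fin d → Fin d)) :
    #(exitSteps A) ≤ (edgeBoundary (gridGraph d) ↑A).ncard := by
  rw [← Set.ncard_coe_finset]
  refine Set.ncard_le_ncard_of_injOn (fun s => s(s.1, update s.1 s.2.1 s.2.2)) ?_ ?_
    (Set.toFinite _)
  · rintro ⟨x, i, t⟩ h
    obtain ⟨hx, ht, hadj⟩ : IsExitStep A x i t := by simpa [exitSteps] using h
    exact ⟨gridGraph_adj_update hadj, x, _, rfl, hx, ht⟩
  · rintro ⟨x, i, t⟩ h ⟨x', i', t'⟩ h' heq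
    obtain ⟨hx, ht, hadj⟩ : IsExitStep A x i t := by simpa [exitSteps] using h
    obtain ⟨hx', ht', -⟩ : IsExitStep A x' i' t' := by simpa [exitSteps] using h'
    obtain ⟨rfl, hy⟩ | ⟨rfl, -⟩ := Sym2.eq_iff.mp heq
    · obtain ⟨rfl, rfl⟩ := eq_of_update_eq_update hadj.ne' hy
      rfl
    · exact absurd hx ht'

end GridPath

theorem grid_edge_isoperimetry_general
    (d : ℕ) (A : Finset (Fin d → Fin d))
    (h2 : (A.card : ℝ) ≤ (d : ℝ) ^ d / 2) :
    (A.card : ℝ) / (2 * d) ≤ ((edgeBoundary (gridGraph d) ↑A).ncard : ℝ) := by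
  have hcount : #A * #Aᶜ ≤ (edgeBoundary (gridGraph d) ↑A).ncard * (d ^ d * d) :=
    (GridPath.card_mul_card_compl_le A).trans
      (Nat.mul_le_mul_right _ (GridPath.card_exitSteps_le_ncard_edgeBoundary A))
  have hcompl : (d : ℝ) ^ d / 2 ≤ #Aᶜ := by
    rw [card_compl, Fintype.card_fun, Fintype.card_fin,
      Nat.cast_sub (by simpa using card_le_univ A)]
    push_cast
    linarith
  have hpow : (0 : ℝ) < (d : ℝ) ^ d := by exact_mod_cast Nat.pow_self_pos
  refine div_le_of_le_mul₀ (by positivity) (by positivity) (le_of_mul_le_mul_left ?_ hpow)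
  calc (d : ℝ) ^ d * #A ≤ 2 * (#A * #Aᶜ) := by nlinarith
    _ ≤ 2 * ((edgeBoundary (gridGraph d) ↑A).ncard * (d ^ d * d)) := by
      exact_mod_cast Nat.mul_le_mul_left 2 hcount
    _ = (d : ℝ) ^ d * ((edgeBoundary (gridGraph d) ↑A).ncard * (2 * d)) := by ring

theorem grid_edge_isoperimetry
    (d : ℕ) (hd : 2 ≤ d) (A : Finset (Fin d → Fin d))
    (h0 : 0 < A.card) (h2 : (A.card : ℝ) ≤ (d : ℝ) ^ d / 2) :
    (A.card : ℝ) / (2 * d) ≤ ((edgeBoundary (gridGraph d) ↑A).ncard : ℝ) :=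
  grid_edge_isoperimetry_general d A h2

end
end
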